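/- arXiv:2602.21840 — 9 statements merged into one kernel-verified Lean document; each statement's English description precedes it below -/
import Mathlib

section
/- For every odd composite positive integer n, there exists an integer a coprime to n such that the Jacobi symbol (a/n) is not congruent to a^((n-1)/2) modulo n. -/
open scoped Classical

/-- The Carmichael lambda function: the least `ℓ > 0` with `a ^ ℓ ≡ 1 (mod n)`
for all `a` coprime to `n`. -/
noncomputable def carmichaelLambda (n : ℕ) : ℕ :=
  sInf {ℓ : ℕ | 0 < ℓ ∧ ∀ a : ℕ, Nat.Coprime a n → a ^ ℓ ≡ 1 [MOD n]}

/-- A Carmichael number: a composite `n` with `a ^ (n-1) ≡ 1 (mod n)`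
for all `a` coprime to `n`. -/
def IsCarmichael (n : ℕ) : Prop :=
  1 < n ∧ ¬ n.Prime ∧ ∀ a : ℕ, Nat.Coprime a n → a ^ (n - 1) ≡ 1 [MOD n]

/-- The Euler liars for `n`, as residues in `{0, …, n-1}` coprime to `n` with
`(a/n) ≡ a ^ ((n-1)/2) (mod n)`. -/
noncomputable def eulerLiars (n : ℕ) : Finset ℕ :=
  (Finset.range n).filter
    (fun a => Nat.Coprime a n ∧ (jacobiSym (a : ℤ) n ≡ (a : ℤ) ^ ((n - 1) / 2) [ZMOD n]))

lemma pow_of_sq_eq_zero {R : Type*} [CommRing R] (x : R) (hx : x ^ 2 = 0) :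
    ∀ m : ℕ, (1 + x) ^ m = 1 + (m : R) * x := by
  intro m
  induction m with
  | zero => simp
  | succ k ih =>
    rw [pow_succ, ih]
    push_cast
    linear_combination (k : R) * hx


/-- For every odd composite positive integer `n`, there exists an integer `a` coprime
to `n` such that the Jacobi symbol `(a/n)` is not congruent to `a ^ ((n-1)/2)` mod `n`. -/
theorem euler_witness_exists (n : ℕ) (hodd : Odd n) (h1 : 1 < n) (hnp : ¬ n.Prime) :
    ∃ a : ℤ, IsCoprime a (n : ℤ) ∧
      ¬ (jacobiSym a n ≡ a ^ ((n - 1) / 2) [ZMOD n]) := by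
  have hn0 : n ≠ 0 := by omega
  have hev : 2 * ((n - 1) / 2) = n - 1 := by
    rcases hodd with ⟨k, hk⟩; omega
  by_cases hsq : Squarefree n
  · -- n is squarefree: n = p * m with p prime, m > 1, coprime
    have hp : n.minFac.Prime := Nat.minFac_prime (by omega)
    set p := n.minFac with hpdef
    obtain ⟨m, hm⟩ : p ∣ n := n.minFac_dvd
    have hm1 : m ≠ 1 := by
      rintro rfl
      rw [mul_one] at hm
      exact hnp (hm ▸ hp)
    have hm0 : m ≠ 0 := by rintro rfl; simp at hm; omega
    have hsm := hsq
    rw [hm, Nat.squarefree_mul_iff] at hsm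
    obtain ⟨hcop, -, -⟩ := hsm
    have hp2 : p ≠ 2 := by
      intro h
      have : 2 ∣ n := h ▸ n.minFac_dvd
      rcases hodd with ⟨k, hk⟩
      omega
    haveI : Fact p.Prime := ⟨hp⟩
    obtain ⟨b, hb⟩ := FiniteField.exists_nonsquare
      (F := ZMod p) (by rwa [ZMod.ringChar_zmod_n])
    have hb0 : b ≠ 0 := fun h => hb (h ▸ ⟨0, by simp⟩)
    obtain ⟨a₀, hap, ham⟩ := Nat.chineseRemainder hcop b.val 1
    -- a₀ is coprime to n
    have hvp : b.val % p = b.val := Nat.mod_eq_of_lt (ZMod.val_lt b)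
    have hv0 : b.val ≠ 0 := fun h => hb0 ((ZMod.val_eq_zero b).mp h)
    have hcopp : Nat.Coprime a₀ p := by
      rw [Nat.coprime_comm, hp.coprime_iff_not_dvd]
      intro hdvd
      have h1 : a₀ % p = b.val % p := hap
      rw [Nat.dvd_iff_mod_eq_zero] at hdvd
      omega
    have hcopm : Nat.Coprime a₀ m := by
      have h1 : a₀ % m = 1 % m := ham
      have : Nat.gcd a₀ m = Nat.gcd (1 : ℕ) m := Nat.ModEq.gcd_eq ham
      simpa [Nat.Coprime] using this
    have hcopn : Nat.Coprime a₀ n := by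
      rw [hm]; exact Nat.Coprime.mul_right hcopp hcopm
    -- cast facts
    have hbp : ((a₀ : ℤ) : ZMod p) = b := by
      have : (a₀ : ZMod p) = (b.val : ZMod p) := (ZMod.natCast_eq_natCast_iff _ _ _).mpr hap
      rw [Int.cast_natCast, this, ZMod.natCast_val, ZMod.cast_id]
    -- Jacobi symbol is -1
    have hjp : jacobiSym (a₀ : ℤ) p = -1 := by
      rw [← jacobiSym.legendreSym.to_jacobiSym]
      exact legendreSym.eq_neg_one_iff p |>.mpr (hbp ▸ hb)
    have ham' : (a₀ : ℤ) ≡ 1 [ZMOD (m : ℕ)] := by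
      have := Int.natCast_modEq_iff.mpr ham
      simpa using this
    have hjm : jacobiSym (a₀ : ℤ) m = 1 := by
      rw [jacobiSym.mod_left' ham', jacobiSym.one_left]
    have hj : jacobiSym (a₀ : ℤ) n = -1 := by
      haveI : NeZero p := ⟨hp.ne_zero⟩
      haveI : NeZero m := ⟨hm0⟩
      rw [hm, jacobiSym.mul_right, hjp, hjm, neg_mul, one_mul]
    refine ⟨(a₀ : ℤ), ?_, ?_⟩
    · rw [Int.isCoprime_iff_gcd_eq_one, Int.gcd_natCast_natCast]
      exact hcopn
    · intro H
      rw [hj] at H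
      have hmd : (m : ℤ) ∣ (n : ℤ) := by exact_mod_cast Dvd.intro_left p hm.symm
      have Hm : (-1 : ℤ) ≡ (a₀ : ℤ) ^ ((n - 1) / 2) [ZMOD (m : ℕ)] := H.of_dvd hmd
      have ha1 : (a₀ : ℤ) ≡ 1 [ZMOD (m : ℕ)] := ham'
      have Hpow : (a₀ : ℤ) ^ ((n - 1) / 2) ≡ 1 [ZMOD (m : ℕ)] := by
        simpa using ha1.pow ((n - 1) / 2)
      have h11 : (-1 : ℤ) ≡ 1 [ZMOD (m : ℕ)] := Hm.trans Hpow
      have hdvd2 : (m : ℤ) ∣ 2 := by simpa using h11.dvd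
      have hdvd2' : m ∣ 2 := by exact_mod_cast hdvd2
      rcases (Nat.dvd_prime Nat.prime_two).mp hdvd2' with h | h
      · exact hm1 h
      · have : 2 ∣ n := by rw [hm, h]; exact Dvd.intro_left p rfl
        rcases hodd with ⟨k, hk⟩
        omega
  · -- n is not squarefree: p ^ 2 ∣ n for some prime p
    rw [Nat.squarefree_iff_prime_squarefree] at hsq
    push_neg at hsq
    obtain ⟨p, hp, hpp⟩ := hsq
    obtain ⟨t, ht⟩ := hpp
    have ht0 : t ≠ 0 := by rintro rfl; simp at ht; omega
    have hpn : p ∣ n := ht ▸ ⟨p * t, by ring⟩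
    set a : ℕ := 1 + p * t with ha
    have hpt0 : 0 < p * t := Nat.mul_pos hp.pos (Nat.pos_of_ne_zero ht0)
    -- coprimality
    have hcopn : Nat.Coprime a n := by
      have h1 : Nat.Coprime a (p * t) := by
        rw [ha]
        exact Nat.coprime_add_self_left.mpr (Nat.coprime_one_left _)
      have h2 : n ∣ (p * t) ^ 2 := ⟨t, by rw [ht]; ring⟩
      exact Nat.Coprime.coprime_dvd_right h2 (h1.pow_right 2)
    -- in ZMod n, x := p*t squares to zero
    have hx2 : ((p * t : ℕ) : ZMod n) ^ 2 = 0 := by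
      have : ((p * t : ℕ) : ZMod n) ^ 2 = ((n : ℕ) : ZMod n) * (t : ZMod n) := by
        push_cast [ht]; ring
      rw [this, ZMod.natCast_self, zero_mul]
    have hap : ((a : ℕ) : ZMod n) ^ p = 1 := by
      have key := pow_of_sq_eq_zero ((p * t : ℕ) : ZMod n) hx2 p
      have hzn : (p : ZMod n) * ((p * t : ℕ) : ZMod n) = 0 := by
        have h' : (p : ZMod n) * ((p * t : ℕ) : ZMod n) = ((n : ℕ) : ZMod n) := by
          push_cast [ht]; ring
        rw [h', ZMod.natCast_self]
      calc ((a : ℕ) : ZMod n) ^ p = (1 + ((p * t : ℕ) : ZMod n)) ^ p := by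
            rw [ha]; push_cast; ring
        _ = 1 + (p : ZMod n) * ((p * t : ℕ) : ZMod n) := key
        _ = 1 := by rw [hzn, add_zero]
    have halt : a < n := by
      have ht1 : 1 ≤ t := Nat.one_le_iff_ne_zero.mpr ht0
      have h2 : 2 * (p * t) ≤ p * (p * t) := Nat.mul_le_mul_right _ hp.two_le
      have h3 : 2 ≤ p * t := le_trans hp.two_le (Nat.le_mul_of_pos_right p (by omega))
      have h4 : p * (p * t) = n := by rw [ht]; ring
      omega
    haveI : Fact (1 < n) := ⟨h1⟩
    have hane : ((a : ℕ) : ZMod n) ≠ 1 := by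
      intro h
      have hv : ((a : ℕ) : ZMod n).val = a := ZMod.val_cast_of_lt halt
      rw [h, ZMod.val_one n] at hv
      omega
    -- order of a in ZMod n is p
    have hord : orderOf ((a : ℕ) : ZMod n) = p := by
      have hdvd : orderOf ((a : ℕ) : ZMod n) ∣ p := orderOf_dvd_of_pow_eq_one hap
      rcases (Nat.dvd_prime hp).mp hdvd with h | h
      · exact absurd (orderOf_eq_one_iff.mp h) hane
      · exact h
    refine ⟨(a : ℤ), ?_, ?_⟩
    · rw [Int.isCoprime_iff_gcd_eq_one, Int.gcd_natCast_natCast]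
      exact hcopn
    · intro H
      -- square both sides
      have Hsq : (jacobiSym (a : ℤ) n) ^ 2 ≡ (a : ℤ) ^ (n - 1) [ZMOD n] := by
        have := H.pow 2
        rwa [← pow_mul, mul_comm ((n - 1) / 2) 2, hev] at this
      have hjpm : jacobiSym (a : ℤ) n = 1 ∨ jacobiSym (a : ℤ) n = -1 :=
        jacobiSym.eq_one_or_neg_one (by rw [Int.gcd_natCast_natCast]; exact hcopn)
      have hj2 : (jacobiSym (a : ℤ) n) ^ 2 = 1 := by
        rcases hjpm with h | h <;> rw [h] <;> ring
      rw [hj2] at Hsq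
      have hone : ((a : ℕ) : ZMod n) ^ (n - 1) = 1 := by
        have := (ZMod.intCast_eq_intCast_iff _ _ _).mpr Hsq
        push_cast at this
        rw [← this]
      have hpdvd : p ∣ n - 1 := hord ▸ orderOf_dvd_of_pow_eq_one hone
      have h1 : p ∣ 1 := by
        have h2 := Nat.dvd_sub hpn hpdvd
        rwa [Nat.sub_sub_self (by omega : 1 ≤ n)] at h2
      exact absurd (Nat.dvd_one.mp h1) hp.ne_one
end

section
/- For every odd composite positive integer n, the number of Euler liars for n among the residues in (Z/nZ)* is at most φ(n)/2, where φ is Euler's totient function. -/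
open scoped Classical

lemma witness_nsf (n : ℕ) (hodd : Odd n) (h1 : 1 < n) (p : ℕ) (hp : p.Prime)
    (hpp : p * p ∣ n) :
    ∃ a : ℕ, Nat.Coprime a n ∧ ((jacobiSym (a : ℤ) n : ℤ) : ZMod n) ≠ (a : ZMod n) ^ ((n - 1) / 2) := by
  have hn0 : n ≠ 0 := by omega
  haveI : NeZero n := ⟨hn0⟩
  have hpn : p ∣ n := dvd_trans (Dvd.intro p rfl) hpp
  set m := n / p with hm
  have hnm : n = p * m := by rw [hm, Nat.mul_div_cancel' hpn]
  have hm0 : 0 < m := Nat.div_pos (Nat.le_of_dvd (by omega) hpn) hp.pos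
  have hmn : m < n := by
    rw [hnm]; exact lt_mul_of_one_lt_left hm0 hp.one_lt
  have hpm : p ∣ m := by
    have h' := hpp
    rw [hnm] at h'
    exact (mul_dvd_mul_iff_left (Nat.Prime.ne_zero hp : (p:ℕ) ≠ 0)).mp h'
  set a := 1 + m with ha
  have hcop : Nat.Coprime a n := by
    rw [Nat.coprime_comm]
    by_contra h
    obtain ⟨q, hq, hqn, hqa⟩ := Nat.Prime.not_coprime_iff_dvd.mp h
    have hqm : q ∣ m := by
      rcases (Nat.Prime.dvd_mul hq).mp (hnm ▸ hqn) with h' | h'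
      · exact ((Nat.prime_dvd_prime_iff_eq hq hp).mp h') ▸ hpm
      · exact h'
    have : q ∣ 1 := (Nat.dvd_add_right hqm).mp (by rwa [ha, add_comm] at hqa)
    exact hq.one_lt.ne' (Nat.dvd_one.mp this)
  refine ⟨a, hcop, ?_⟩
  intro hcond
  have hm2 : ((m : ZMod n)) * (m : ZMod n) = 0 := by
    rw [← Nat.cast_mul, ZMod.natCast_eq_zero_iff, hnm]
    exact mul_dvd_mul hpm dvd_rfl
  -- (a : ZMod n)^k = 1 + k * m
  have hpow : ∀ k : ℕ, (a : ZMod n) ^ k = 1 + (k : ZMod n) * (m : ZMod n) := by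
    intro k
    induction k with
    | zero => simp
    | succ k ih =>
      rw [pow_succ, ih, ha]
      push_cast
      have : ((m:ZMod n))^2 = 0 := by rw [sq, hm2]
      ring_nf
      rw [this]
      ring
  -- jacobi symbol is ±1
  have hJ : jacobiSym (a : ℤ) n = 1 ∨ jacobiSym (a : ℤ) n = -1 := by
    apply jacobiSym.eq_one_or_neg_one
    rwa [Int.gcd_natCast_natCast]
  -- square the liar condition
  have hsq : ((a : ZMod n) ^ ((n - 1) / 2)) ^ 2 = 1 := by
    rw [← hcond]
    rcases hJ with h | h <;> rw [h] <;> push_cast <;> ring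
  have hev : (n - 1) / 2 * 2 = n - 1 := by
    obtain ⟨t, ht⟩ := hodd; omega
  rw [← pow_mul, hev, hpow] at hsq
  -- (n - 1 : ZMod n) = -1
  have hcast : ((n - 1 : ℕ) : ZMod n) = -1 := by
    have : ((n - 1 : ℕ) : ZMod n) = (n : ZMod n) - 1 := by
      have := Nat.cast_sub (by omega : 1 ≤ n) (R := ZMod n)
      simpa using this
    rw [this, ZMod.natCast_self]; ring
  rw [hcast] at hsq
  have hmz : (m : ZMod n) = 0 := by linear_combination -hsq
  rw [ZMod.natCast_eq_zero_iff] at hmz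
  exact absurd (Nat.le_of_dvd hm0 hmz) (by omega)


lemma witness_sf (n : ℕ) (hodd : Odd n) (h1 : 1 < n) (hnp : ¬ n.Prime)
    (hsf : Squarefree n) :
    ∃ a : ℕ, Nat.Coprime a n ∧ ((jacobiSym (a : ℤ) n : ℤ) : ZMod n) ≠ (a : ZMod n) ^ ((n - 1) / 2) := by
  have hn0 : n ≠ 0 := by omega
  haveI : NeZero n := ⟨hn0⟩
  set p := n.minFac with hp
  have hpp : p.Prime := Nat.minFac_prime (by omega)
  haveI : Fact p.Prime := ⟨hpp⟩
  have hpn : p ∣ n := Nat.minFac_dvd n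
  set m := n / p with hm
  have hnm : n = p * m := by rw [hm, Nat.mul_div_cancel' hpn]
  have hm0 : 0 < m := Nat.div_pos (Nat.le_of_dvd (by omega) hpn) hpp.pos
  have hm1 : 1 < m := by
    by_contra h
    have hm1' : m = 1 := by omega
    rw [hm1', mul_one] at hnm
    exact hnp (hnm ▸ hpp)
  have hpm : ¬ p ∣ m := by
    intro h
    have := hsf p (by rw [hnm]; exact mul_dvd_mul_left p h)
    exact hpp.one_lt.ne' (Nat.isUnit_iff.mp this)
  have hcpm : Nat.Coprime p m := (Nat.Prime.coprime_iff_not_dvd hpp).mpr hpm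
  have hmodd : Odd m := by
    rw [hnm] at hodd; rcases Nat.odd_mul.mp hodd with ⟨_, h⟩; exact h
  have hpodd : Odd p := by
    rw [hnm] at hodd; rcases Nat.odd_mul.mp hodd with ⟨h, _⟩; exact h
  have hp2 : p ≠ 2 := by
    intro h; have := Nat.odd_iff.mp hpodd; omega
  -- a nonsquare mod p
  obtain ⟨b, hb⟩ := FiniteField.exists_nonsquare (F := ZMod p) (by rwa [ZMod.ringChar_zmod_n])
  have hb0 : b ≠ 0 := fun h => hb (h ▸ ⟨0, (mul_zero 0).symm⟩)
  -- CRT element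
  obtain ⟨a, hap, ham⟩ := Nat.chineseRemainder hcpm b.val 1
  have hazp : ((a : ℕ) : ZMod p) = b := by
    rw [(ZMod.natCast_eq_natCast_iff _ _ _).mpr hap, ZMod.natCast_val, ZMod.cast_id]
  have hazm : ((a : ℕ) : ZMod m) = 1 := by
    have := (ZMod.natCast_eq_natCast_iff _ _ _).mpr ham
    simpa using this
  have hcop : Nat.Coprime a n := by
    rw [hnm, Nat.coprime_mul_iff_right]
    constructor
    · rw [Nat.coprime_comm, hpp.coprime_iff_not_dvd]
      intro h
      rw [← ZMod.natCast_eq_zero_iff] at h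
      exact hb0 (hazp ▸ h)
    · have ham' : a % m = 1 % m := ham
      rw [Nat.Coprime, Nat.gcd_comm, Nat.gcd_rec, ham', Nat.mod_eq_of_lt hm1]
      exact Nat.gcd_comm 1 m ▸ Nat.gcd_one_left m
  refine ⟨a, hcop, ?_⟩
  -- compute the Jacobi symbol
  have hJm : jacobiSym (a : ℤ) m = 1 := by
    have hmod : ((a : ℤ)) % m = (1 : ℤ) % m := by
      have := ham
      unfold Nat.ModEq at this
      exact_mod_cast this
    rw [jacobiSym.mod_left' hmod, jacobiSym.one_left]
  have hJp : jacobiSym (a : ℤ) p = -1 := by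
    rw [← jacobiSym.legendreSym.to_jacobiSym]
    rw [legendreSym.eq_neg_one_iff]
    rwa [Int.cast_natCast, hazp]
  have hJ : jacobiSym (a : ℤ) n = -1 := by
    rw [hnm, jacobiSym.mul_right' _ hpp.ne_zero (by omega), hJp, hJm, neg_one_mul]
  rw [hJ]
  intro hcond
  -- push to ZMod m
  have hmd : m ∣ n := Dvd.intro_left p hnm.symm
  have := congrArg (ZMod.castHom hmd (ZMod m)) hcond
  rw [map_pow, map_intCast, map_natCast, hazm, one_pow] at this
  have h2 : ((2 : ℕ) : ZMod m) = 0 := by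
    push_cast
    linear_combination -this
  rw [ZMod.natCast_eq_zero_iff] at h2
  have := Nat.le_of_dvd (by omega) h2
  have := Nat.odd_iff.mp hmodd
  omega



section Main
variable (n : ℕ) [NeZero n]

/-- liar condition on units -/
def liarCond (u : (ZMod n)ˣ) : Prop :=
  ((jacobiSym (((u : ZMod n).val : ℕ) : ℤ) n : ℤ) : ZMod n) = (u : ZMod n) ^ ((n - 1) / 2)

lemma jacobi_val_mul (u w : (ZMod n)ˣ) :
    jacobiSym ((((w * u : (ZMod n)ˣ) : ZMod n).val : ℤ)) n
      = jacobiSym (((w : ZMod n).val : ℤ)) n * jacobiSym (((u : ZMod n).val : ℤ)) n := by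
  have h1 : ((w * u : (ZMod n)ˣ) : ZMod n).val = ((w : ZMod n).val * (u : ZMod n).val) % n := by
    rw [Units.val_mul, ZMod.val_mul]
  rw [h1, ← jacobiSym.mul_left]
  apply jacobiSym.mod_left'
  push_cast
  simp [Int.emod_emod_of_dvd]

lemma liar_key (u w : (ZMod n)ˣ) (hu : liarCond n u) (huw : liarCond n (w * u)) :
    liarCond n w := by
  set k := (n - 1) / 2
  have hJu : jacobiSym (((u : ZMod n).val : ℤ)) n = 1 ∨
      jacobiSym (((u : ZMod n).val : ℤ)) n = -1 := by
    apply jacobiSym.eq_one_or_neg_one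
    have := ZMod.val_coe_unit_coprime u
    rwa [Int.gcd_natCast_natCast]
  unfold liarCond at hu huw ⊢
  rw [jacobi_val_mul] at huw
  push_cast at huw
  rw [mul_pow, ← hu] at huw
  rcases hJu with h | h <;> rw [h] at huw <;> push_cast at huw ⊢
  · linear_combination huw
  · linear_combination -huw


lemma liars_card_eq :
    (eulerLiars n).card = (Finset.univ.filter (liarCond n)).card := by
  apply Finset.card_bij (fun a ha => ZMod.unitOfCoprime a
    (by simp only [eulerLiars, Finset.mem_filter] at ha; exact ha.2.1))
  · intro a ha
    simp only [eulerLiars, Finset.mem_filter, Finset.mem_range] at ha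
    obtain ⟨hlt, hcop, hmod⟩ := ha
    simp only [Finset.mem_filter, Finset.mem_univ, true_and]
    unfold liarCond
    have hval : ((ZMod.unitOfCoprime a hcop : ZMod n)).val = a := by
      simp [ZMod.unitOfCoprime, ZMod.val_natCast, Nat.mod_eq_of_lt hlt]
    rw [hval]
    have := (ZMod.intCast_eq_intCast_iff _ _ _).mpr hmod
    simp only [ZMod.unitOfCoprime]
    push_cast at this ⊢
    exact this
  · intro a ha b hb h
    simp only [eulerLiars, Finset.mem_filter, Finset.mem_range] at ha hb
    have : ((a : ZMod n)) = (b : ZMod n) := by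
      have := congrArg (fun u => ((u : (ZMod n)ˣ) : ZMod n)) h
      simpa [ZMod.unitOfCoprime] using this
    have := congrArg ZMod.val this
    rwa [ZMod.val_natCast, ZMod.val_natCast, Nat.mod_eq_of_lt ha.1,
      Nat.mod_eq_of_lt hb.1] at this
  · intro u hu
    simp only [Finset.mem_filter, Finset.mem_univ, true_and] at hu
    refine ⟨((u : ZMod n)).val, ?_, ?_⟩
    · simp only [eulerLiars, Finset.mem_filter, Finset.mem_range]
      refine ⟨ZMod.val_lt _, ZMod.val_coe_unit_coprime u, ?_⟩
      rw [← ZMod.intCast_eq_intCast_iff]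
      unfold liarCond at hu
      have hval2 : ((((u : ZMod n)).val : ℕ) : ZMod n) = (u : ZMod n) := by
        rw [ZMod.natCast_val, ZMod.cast_id]
      rw [Int.cast_pow, Int.cast_natCast, hval2]
      exact hu
    · apply Units.ext
      simp [ZMod.unitOfCoprime, ZMod.natCast_val, ZMod.cast_id]

lemma liars_card_le (w : (ZMod n)ˣ) (hw : ¬ liarCond n w) :
    (Finset.univ.filter (liarCond n)).card ≤ n.totient / 2 := by
  set L := Finset.univ.filter (liarCond n) with hL
  have hmap : ∀ u ∈ L, w * u ∈ Finset.univ \ L := by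
    intro u hu
    simp only [hL, Finset.mem_filter, Finset.mem_univ, true_and, Finset.mem_sdiff] at hu ⊢
    exact fun h => hw (liar_key n u w hu h)
  have hinj : Set.InjOn (fun u => w * u) L := by
    intro u _ v _ h
    exact mul_left_cancel h
  have hcard : L.card ≤ (Finset.univ \ L).card :=
    Finset.card_le_card_of_injOn _ hmap hinj
  have htot : (Finset.univ : Finset (ZMod n)ˣ).card = n.totient := by
    rw [Finset.card_univ, ZMod.card_units_eq_totient]
  have hsub : (Finset.univ \ L).card = n.totient - L.card := by
    rw [Finset.card_sdiff_of_subset (Finset.subset_univ L), htot]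
  omega

end Main

/-- For every odd composite positive integer `n`, the number of Euler liars for `n`
among the residues in `(ℤ/nℤ)*` is at most `φ(n)/2`. -/
theorem eulerLiars_card_le (n : ℕ) (hodd : Odd n) (h1 : 1 < n) (hnp : ¬ n.Prime) :
    (eulerLiars n).card ≤ n.totient / 2 := by
  haveI : NeZero n := ⟨by omega⟩
  obtain ⟨a, hcop, hna⟩ : ∃ a : ℕ, Nat.Coprime a n ∧
      ((jacobiSym (a : ℤ) n : ℤ) : ZMod n) ≠ (a : ZMod n) ^ ((n - 1) / 2) := by
    by_cases hsf : Squarefree n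
    · exact witness_sf n hodd h1 hnp hsf
    · rw [Nat.squarefree_iff_prime_squarefree] at hsf
      push_neg at hsf
      obtain ⟨p, hp, hpp⟩ := hsf
      exact witness_nsf n hodd h1 p hp hpp
  set w := ZMod.unitOfCoprime a hcop with hwdef
  have hw : ¬ liarCond n w := by
    unfold liarCond
    intro h
    apply hna
    have hval : ((w : ZMod n)).val = a % n := by
      simp [hwdef, ZMod.unitOfCoprime, ZMod.val_natCast]
    rw [hval] at h
    have hJ : jacobiSym ((a % n : ℕ) : ℤ) n = jacobiSym (a : ℤ) n := by
      apply jacobiSym.mod_left'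
      push_cast
      simp [Int.emod_emod_of_dvd]
    rw [hJ] at h
    have hwa : (w : ZMod n) = (a : ZMod n) := by simp [hwdef, ZMod.unitOfCoprime]
    rw [hwa] at h
    exact h
  rw [liars_card_eq]
  exact liars_card_le n w hw
end

section
/- Let n be a Carmichael number whose index i(n) = (n−1)/λ(n) is even. Then for every integer a coprime to n one has a^((n-1)/2) ≡ 1 (mod n); consequently the Euler liars for n are exactly the a ∈ (Z/nZ)* with Jacobi symbol (a/n) = 1, there are exactly φ(n)/2 of them, and every Euler liar for n has Jacobi symbol 1. -/
open scoped Classical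

open Finset
open scoped Nat NumberTheorySymbols

/-! Since `λ(n) ∣ n - 1` and the index is even, `(n - 1)/2` is a multiple of `λ(n)`, so every
unit `a` satisfies `a ^ ((n-1)/2) ≡ 1`. As `J(a | n) = ±1` and `-1 ≢ 1 (mod n)`, the Euler
criterion `J(a | n) ≡ a ^ ((n-1)/2)` then holds exactly when `J(a | n) = 1`. A Carmichael number
is odd and squarefree (Korselt), hence not a square, so some `b` has `J(b | n) = -1`;
multiplication by `b` swaps the residues of Jacobi symbol `1` and `-1`, which therefore each make
up half of `φ(n)`. -/

lemma carmichaelLambda_spec {n : ℕ} (hn : n ≠ 0) :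
    0 < carmichaelLambda n ∧ ∀ a : ℕ, a.Coprime n → a ^ carmichaelLambda n ≡ 1 [MOD n] :=
  Nat.sInf_mem (s := {ℓ : ℕ | 0 < ℓ ∧ ∀ a : ℕ, a.Coprime n → a ^ ℓ ≡ 1 [MOD n]})
    ⟨φ n, Nat.totient_pos.mpr (Nat.pos_of_ne_zero hn), fun _ ha => Nat.ModEq.pow_totient ha⟩

lemma carmichaelLambda_dvd {n e : ℕ} (hn : n ≠ 0)
    (he : ∀ a : ℕ, a.Coprime n → a ^ e ≡ 1 [MOD n]) : carmichaelLambda n ∣ e := by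
  obtain ⟨hpos, hL⟩ := carmichaelLambda_spec hn
  set L := carmichaelLambda n
  refine Nat.dvd_of_mod_eq_zero (Nat.eq_zero_of_not_pos fun hr => ?_)
  have hrem : ∀ a : ℕ, a.Coprime n → a ^ (e % L) ≡ 1 [MOD n] := fun a ha => by
    have hq : (a ^ L) ^ (e / L) ≡ 1 [MOD n] := by simpa using (hL a ha).pow (e / L)
    calc a ^ (e % L) = 1 * a ^ (e % L) := (one_mul _).symm
      _ ≡ (a ^ L) ^ (e / L) * a ^ (e % L) [MOD n] := hq.symm.mul_right _
      _ = a ^ e := by rw [← pow_mul, ← pow_add, Nat.div_add_mod]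
      _ ≡ 1 [MOD n] := he a ha
  exact (Nat.mod_lt e hpos).not_ge (Nat.sInf_le ⟨hr, hrem⟩)

lemma zmod_pow_eq_one_of_forall_coprime {n e : ℕ} [NeZero n]
    (h : ∀ a : ℕ, a.Coprime n → a ^ e ≡ 1 [MOD n]) {x : ZMod n} (hx : IsUnit x) :
    x ^ e = 1 := by
  rw [← ZMod.natCast_zmod_val x] at hx ⊢
  exact_mod_cast (ZMod.natCast_eq_natCast_iff _ _ _).mpr (h _ ((ZMod.isUnit_iff_coprime _ _).mp hx))

lemma int_pow_modEq_one_of_forall_coprime {n e : ℕ} (hn : n ≠ 0)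
    (h : ∀ a : ℕ, a.Coprime n → a ^ e ≡ 1 [MOD n]) {a : ℤ} (ha : IsCoprime a n) :
    a ^ e ≡ 1 [ZMOD n] := by
  have : NeZero n := ⟨hn⟩
  have hunit : IsUnit (a : ZMod n) :=
    isCoprime_zero_right.mp (by simpa using ha.map (Int.castRingHom (ZMod n)))
  exact (ZMod.intCast_eq_intCast_iff _ _ _).mp <| by
    push_cast
    exact zmod_pow_eq_one_of_forall_coprime h hunit

lemma one_add_pow_of_sq_eq_zero {R : Type*} [CommRing R] {x : R} (hx : x ^ 2 = 0) (m : ℕ) :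
    (1 + x) ^ m = 1 + m * x := by
  induction m with
  | zero => simp
  | succ m ih =>
    rw [pow_succ, ih]
    push_cast
    linear_combination (m : R) * hx

namespace IsCarmichael

variable {n : ℕ} (hc : IsCarmichael n)
include hc

lemma two_lt : 2 < n := by
  obtain ⟨h1, hprime, -⟩ := hc
  have : n ≠ 2 := by rintro rfl; exact hprime Nat.prime_two
  omega

lemma ne_zero : n ≠ 0 := by have := hc.two_lt; omega

lemma pow_eq_one {x : ZMod n} (hx : IsUnit x) : x ^ (n - 1) = 1 :=
  have : NeZero n := ⟨hc.ne_zero⟩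
  zmod_pow_eq_one_of_forall_coprime hc.2.2 hx

lemma odd : Odd n := by
  have : Fact (2 < n) := ⟨hc.two_lt⟩
  have heven : Even (n - 1) :=
    (neg_one_pow_eq_one_iff_even ZMod.neg_one_ne_one).mp (hc.pow_eq_one isUnit_one.neg)
  have := hc.two_lt
  rw [Nat.odd_iff]
  rw [Nat.even_iff] at heven
  omega

lemma pow_half_modEq_one (hidx : Even ((n - 1) / carmichaelLambda n)) (a : ℕ) (ha : a.Coprime n) :
    a ^ ((n - 1) / 2) ≡ 1 [MOD n] := by
  obtain ⟨hpos, hL⟩ := carmichaelLambda_spec hc.ne_zero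
  obtain ⟨k, hk⟩ := hidx
  obtain ⟨q, hq⟩ := carmichaelLambda_dvd hc.ne_zero hc.2.2
  rw [hq, Nat.mul_div_cancel_left _ hpos] at hk
  have hhalf : (n - 1) / 2 = carmichaelLambda n * k := by
    rw [hq, hk, mul_add]
    omega
  rw [hhalf, pow_mul]
  simpa using (hL a ha).pow k

/-- Korselt: if `p² ∣ n`, then `t = n / p` has `t² ≡ 0`, so `(1 + t) ^ (n - 1) ≡ 1 - t`
forces `n ∣ t`. -/
lemma squarefree : Squarefree n := by
  rw [Nat.squarefree_iff_prime_squarefree]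
  intro p hp hpp
  obtain ⟨t, rfl⟩ := (dvd_mul_right p p).trans hpp
  have hpt : p ∣ t := (Nat.mul_dvd_mul_iff_left hp.pos).mp hpp
  have hsq : (t : ZMod (p * t)) ^ 2 = 0 := by
    obtain ⟨s, rfl⟩ := hpt
    rw [← Nat.cast_pow, ZMod.natCast_eq_zero_iff]
    exact ⟨s, by ring⟩
  have hpow := hc.pow_eq_one (IsNilpotent.isUnit_one_add ⟨2, hsq⟩)
  rw [one_add_pow_of_sq_eq_zero hsq, Nat.cast_sub (by have := hc.two_lt; omega),
    ZMod.natCast_self] at hpow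
  have ht : (t : ZMod (p * t)) = 0 := by linear_combination -hpow
  have ht0 : t ≠ 0 := by rintro rfl; exact hc.ne_zero (mul_zero p)
  have ht_pos := Nat.pos_of_ne_zero ht0
  have := Nat.le_of_dvd ht_pos ((ZMod.natCast_eq_zero_iff _ _).mp ht)
  nlinarith [hp.two_le]

end IsCarmichael

lemma exists_jacobiSym_eq_neg_one {n : ℕ} (hodd : Odd n) (hsf : Squarefree n) (hn : n ≠ 1) :
    ∃ b : ℕ, J(b | n) = -1 := by
  set p := n.minFac
  have hp : p.Prime := Nat.minFac_prime hn
  have : Fact p.Prime := ⟨hp⟩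
  obtain ⟨m, hm⟩ := Nat.minFac_dvd n
  have hm0 : m ≠ 0 := by rintro rfl; exact hodd.pos.ne' (by rw [hm, mul_zero])
  have hpm : p.Coprime m := (Nat.Prime.coprime_iff_not_dvd hp).mpr fun h =>
    Nat.squarefree_iff_prime_squarefree.mp hsf p hp (hm ▸ mul_dvd_mul_left p h)
  have hp2 : ringChar (ZMod p) ≠ 2 := by
    rw [ZMod.ringChar_zmod_n]
    intro h
    have hpodd : Odd p := hodd.of_dvd_nat (Nat.minFac_dvd n)
    rw [h] at hpodd
    exact absurd hpodd (by decide)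
  obtain ⟨x, hx⟩ := FiniteField.exists_nonsquare hp2
  obtain ⟨b, hbp, hbm⟩ := Nat.chineseRemainder hpm x.val 1
  refine ⟨b, ?_⟩
  have hJp : J(b | p) = -1 := by
    rw [ZMod.nonsquare_iff_jacobiSym_eq_neg_one, Int.cast_natCast,
      (ZMod.natCast_eq_natCast_iff _ _ _).mpr hbp, ZMod.natCast_zmod_val]
    exact hx
  have hJm : J(b | m) = 1 := by
    rw [jacobiSym.mod_left' (Int.natCast_modEq_iff.mpr hbm), Nat.cast_one, jacobiSym.one_left]
  rw [hm, jacobiSym.mul_right' _ hp.ne_zero hm0, hJp, hJm, mul_one]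

lemma gcd_eq_one_of_jacobiSym_eq_neg_one {a : ℤ} {n : ℕ} (h : J(a | n) = -1) : a.gcd n = 1 := by
  by_contra hne
  have hn : n ≠ 0 := by rintro rfl; simp at h
  rw [jacobiSym.eq_zero_iff.mpr ⟨hn, hne⟩] at h
  exact absurd h (by decide)

lemma jacobiSym_modEq_one_iff {n : ℕ} (hn : 2 < n) {a : ℤ} (ha : a.gcd n = 1) :
    J(a | n) ≡ 1 [ZMOD n] ↔ J(a | n) = 1 := by
  refine ⟨fun h => ?_, fun h => by rw [h]⟩
  rcases jacobiSym.eq_one_or_neg_one ha with h1 | h1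
  · exact h1
  · rw [h1] at h
    have := Int.le_of_dvd two_pos (by simpa using h.dvd)
    omega

noncomputable def jacobiFiber (n : ℕ) (s : ℤ) : Finset ℕ :=
  (range n).filter fun a => a.Coprime n ∧ J(a | n) = s

lemma mul_mod_mem_jacobiFiber {n a b : ℕ} {s : ℤ} (hb : b.Coprime n)
    (ha : a ∈ jacobiFiber n s) :
    a * b % n ∈ jacobiFiber n (s * J(b | n)) := by
  obtain ⟨han, hac, haJ⟩ := by simpa only [jacobiFiber, mem_filter, mem_range] using ha
  simp only [jacobiFiber, mem_filter, mem_range]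
  refine ⟨Nat.mod_lt _ (by omega), ?_, ?_⟩
  · exact (ZMod.coprime_mod_iff_coprime _ _).mpr (hac.mul_left hb)
  · rw [jacobiSym.mod_left, Int.natCast_mod, Int.emod_emod_of_dvd _ dvd_rfl,
      ← jacobiSym.mod_left, Nat.cast_mul, jacobiSym.mul_left, haJ]

lemma injOn_mul_mod {n b : ℕ} (hb : b.Coprime n) :
    Set.InjOn (fun a => a * b % n) (range n : Set ℕ) := fun _ ha _ ha' h =>
  Nat.ModEq.eq_of_lt_of_lt (Nat.ModEq.cancel_right_of_coprime hb.symm h)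
    (mem_range.mp ha) (mem_range.mp ha')

lemma card_jacobiFiber_le_neg {n b : ℕ} (hb : J(b | n) = -1) (s : ℤ) :
    #(jacobiFiber n s) ≤ #(jacobiFiber n (-s)) := by
  have hbn : b.Coprime n := by
    simpa [Int.gcd_natCast_natCast] using gcd_eq_one_of_jacobiSym_eq_neg_one hb
  refine card_le_card_of_injOn _ (fun a ha => ?_) ((injOn_mul_mod hbn).mono ?_)
  · simpa [hb] using mul_mod_mem_jacobiFiber hbn ha
  · exact coe_subset.mpr (filter_subset _ _)

lemma card_jacobiFiber_one_add_neg_one (n : ℕ) :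
    #(jacobiFiber n 1) + #(jacobiFiber n (-1)) = φ n := by
  rw [jacobiFiber, jacobiFiber,
    ← card_union_of_disjoint (disjoint_filter.mpr fun _ _ h1 h2 => by omega), ← filter_or,
    Nat.totient_eq_card_coprime]
  congr 1
  refine filter_congr fun a _ => ⟨fun h => ?_, fun h => ?_⟩
  · rcases h with h | h <;> exact h.1.symm
  · have ha : (a : ℤ).gcd n = 1 := by rw [Int.gcd_natCast_natCast]; exact h.symm
    rcases jacobiSym.eq_one_or_neg_one ha with hJ | hJ
    exacts [Or.inl ⟨h.symm, hJ⟩, Or.inr ⟨h.symm, hJ⟩]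

lemma card_jacobiFiber_one {n b : ℕ} (hb : J(b | n) = -1) : #(jacobiFiber n 1) = φ n / 2 := by
  have h1 := card_jacobiFiber_le_neg hb 1
  have h2 := card_jacobiFiber_le_neg hb (-1)
  rw [neg_neg] at h2
  have := card_jacobiFiber_one_add_neg_one n
  omega

lemma eulerLiars_eq_jacobiFiber_one {n : ℕ} (hn : 2 < n)
    (hpow : ∀ a : ℤ, IsCoprime a n → a ^ ((n - 1) / 2) ≡ 1 [ZMOD n]) :
    eulerLiars n = jacobiFiber n 1 := by
  refine filter_congr fun a _ => and_congr_right fun ha => ?_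
  have hpa := hpow a (Nat.isCoprime_iff_coprime.mpr ha)
  rw [← jacobiSym_modEq_one_iff hn (by rwa [Int.gcd_natCast_natCast])]
  exact ⟨fun h => h.trans hpa, fun h => h.trans hpa.symm⟩

/-- For a Carmichael number of even index, every coprime `a` satisfies
`a ^ ((n-1)/2) ≡ 1 (mod n)`; the Euler liars are exactly the residues with Jacobi
symbol `1`, there are exactly `φ(n)/2` of them, and every Euler liar has Jacobi
symbol `1`. -/
theorem classA_eulerLiars (n : ℕ) (hc : IsCarmichael n)
    (hidx : Even ((n - 1) / carmichaelLambda n)) :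
    (∀ a : ℤ, IsCoprime a (n : ℤ) → a ^ ((n - 1) / 2) ≡ 1 [ZMOD n]) ∧
    eulerLiars n =
      (Finset.range n).filter (fun a => Nat.Coprime a n ∧ jacobiSym (a : ℤ) n = 1) ∧
    (eulerLiars n).card = n.totient / 2 ∧
    (∀ a ∈ eulerLiars n, jacobiSym (a : ℤ) n = 1) := by
  have hpow : ∀ a : ℤ, IsCoprime a n → a ^ ((n - 1) / 2) ≡ 1 [ZMOD n] := fun _ =>
    int_pow_modEq_one_of_forall_coprime hc.ne_zero (hc.pow_half_modEq_one hidx)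
  have hliars := eulerLiars_eq_jacobiFiber_one hc.two_lt hpow
  obtain ⟨b, hb⟩ := exists_jacobiSym_eq_neg_one hc.odd hc.squarefree hc.1.ne'
  refine ⟨hpow, hliars, by rw [hliars, card_jacobiFiber_one hb], fun a ha => ?_⟩
  rw [hliars] at ha
  exact (mem_filter.mp ha).2.2
end

section
/- Let n = p_1 · p_2 · ⋯ · p_k be a Carmichael number with distinct prime factors p_1, …, p_k, and suppose that v_2(λ(n)) = v_2(p_i − 1) for every i, where v_2 denotes the 2-adic valuation. Then the index i(n) = (n−1)/λ(n) is odd if and only if k is odd (the parity of i(n) equals the parity of k). -/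
open scoped Classical

lemma pow_modEq_iff (a ℓ n : ℕ) : a ^ ℓ ≡ 1 [MOD n] ↔ ((a : ZMod n)) ^ ℓ = 1 := by
  rw [show ((1 : ZMod n)) = ((1 : ℕ) : ZMod n) by push_cast; rfl,
    show ((a : ZMod n)) ^ ℓ = ((a ^ ℓ : ℕ) : ZMod n) by push_cast; rfl,
    ZMod.natCast_eq_natCast_iff]

lemma carmichael_mem (n : ℕ) (hc : IsCarmichael n) :
    0 < carmichaelLambda n ∧
      ∀ a : ℕ, Nat.Coprime a n → a ^ carmichaelLambda n ≡ 1 [MOD n] := by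
  have h : (n - 1) ∈ {ℓ : ℕ | 0 < ℓ ∧ ∀ a : ℕ, Nat.Coprime a n → a ^ ℓ ≡ 1 [MOD n]} :=
    ⟨by have := hc.1; omega, hc.2.2⟩
  exact Nat.sInf_mem ⟨n - 1, h⟩

lemma carmichael_dvd (n : ℕ) (hc : IsCarmichael n) : carmichaelLambda n ∣ n - 1 := by
  obtain ⟨hpos, hpow⟩ := carmichael_mem n hc
  set L := carmichaelLambda n with hL
  set d := Nat.gcd L (n - 1) with hd
  have hdpos : 0 < d := Nat.gcd_pos_of_pos_left _ hpos
  have hdmem : d ∈ {ℓ : ℕ | 0 < ℓ ∧ ∀ a : ℕ, Nat.Coprime a n → a ^ ℓ ≡ 1 [MOD n]} := by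
    refine ⟨hdpos, fun a ha => ?_⟩
    rw [pow_modEq_iff]
    have h1 : orderOf ((a : ZMod n)) ∣ L :=
      orderOf_dvd_iff_pow_eq_one.mpr ((pow_modEq_iff a L n).mp (hpow a ha))
    have h2 : orderOf ((a : ZMod n)) ∣ n - 1 :=
      orderOf_dvd_iff_pow_eq_one.mpr ((pow_modEq_iff a (n-1) n).mp (hc.2.2 a ha))
    exact orderOf_dvd_iff_pow_eq_one.mp (Nat.dvd_gcd h1 h2)
  have hle : L ≤ d := Nat.sInf_le hdmem
  have hdvd : d ∣ L := Nat.gcd_dvd_left _ _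
  have : d = L := le_antisymm (Nat.le_of_dvd hpos hdvd) hle
  rw [← this]
  exact Nat.gcd_dvd_right _ _

lemma one_add_pow_int (m : ℤ) (k : ℕ) : ∃ c : ℤ, (1 + m) ^ k = 1 + k * m + m ^ 2 * c := by
  induction k with
  | zero => exact ⟨0, by ring⟩
  | succ k ih =>
    obtain ⟨c, hcc⟩ := ih
    exact ⟨c + k + m * c, by rw [pow_succ, hcc]; push_cast; ring⟩

lemma carmichael_squarefree (n : ℕ) (hc : IsCarmichael n) : Squarefree n := by
  obtain ⟨hn1, hnp, hC⟩ := hc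
  have hn0 : n ≠ 0 := by omega
  rw [Nat.squarefree_iff_prime_squarefree]
  intro p hpP hpp
  have hp : p.Prime := hpP
  haveI : Fact p.Prime := ⟨hp⟩
  set v := padicValNat p n with hvdef
  have hv2 : 2 ≤ v := by
    rw [← padicValNat_dvd_iff_le hn0]
    simpa [pow_two] using hpp
  have hpvn : p ^ v ∣ n := pow_padicValNat_dvd
  set s := n / p ^ v with hs
  have hns : n = p ^ v * s := (Nat.mul_div_cancel' hpvn).symm
  have hps : ¬ p ∣ s := by
    intro h
    have : p ^ (v + 1) ∣ n := by
      rw [hns, pow_succ]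
      exact Nat.mul_dvd_mul dvd_rfl h
    exact pow_succ_padicValNat_not_dvd hn0 this
  set m := p * s with hm
  have hpn : p ∣ n := dvd_trans (dvd_pow_self p (by omega)) hpvn
  have hpm : p ∣ m := Dvd.intro s rfl
  have hcop : Nat.Coprime (1 + m) n := by
    by_contra h
    obtain ⟨q, hq, hq1, hq2⟩ := Nat.Prime.not_coprime_iff_dvd.mp h
    have hqm : q ∣ m := by
      rcases (Nat.Prime.dvd_mul hq).mp (hns ▸ hq2) with h' | h'
      · have hqp : q = p := (Nat.prime_dvd_prime_iff_eq hq hp).mp (hq.dvd_of_dvd_pow h')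
        rw [hqp]
        exact hpm
      · exact Dvd.dvd.mul_left h' p
    have : q ∣ 1 := (Nat.dvd_add_right hqm).mp (by rwa [Nat.add_comm] at hq1)
    exact hq.one_lt.ne' (Nat.dvd_one.mp this)
  have hmod := hC (1 + m) hcop
  have hint : (n : ℤ) ∣ ((1 + m : ℕ) : ℤ) ^ (n - 1) - 1 := by
    have h' : ((1 + m : ℕ) : ℤ) ^ (n - 1) ≡ 1 [ZMOD (n : ℤ)] := by
      have := Int.natCast_modEq_iff.mpr hmod
      simpa using this
    simpa using Int.ModEq.dvd h'.symm
  obtain ⟨c, hcc⟩ := one_add_pow_int (m : ℤ) (n - 1)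
  have hint2 : (p : ℤ) ^ 2 ∣ ((n - 1 : ℕ) : ℤ) * m := by
    have hp2n : (p : ℤ) ^ 2 ∣ (n : ℤ) := by
      exact_mod_cast Int.natCast_dvd_natCast.mpr (by simpa [pow_two] using hpp)
    have h1 : (p : ℤ) ^ 2 ∣ ((n - 1 : ℕ) : ℤ) * m + (m : ℤ) ^ 2 * c := by
      have : ((1 + m : ℕ) : ℤ) ^ (n - 1) - 1 = ((n - 1 : ℕ) : ℤ) * m + (m : ℤ) ^ 2 * c := by
        push_cast
        rw [hcc]; ring
      exact dvd_trans hp2n (this ▸ hint)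
    have h2 : (p : ℤ) ^ 2 ∣ (m : ℤ) ^ 2 * c :=
      Dvd.dvd.mul_right (pow_dvd_pow_of_dvd (Int.natCast_dvd_natCast.mpr hpm) 2) c
    simpa using dvd_sub h1 h2
  have hnat2 : p ^ 2 ∣ (n - 1) * m := by exact_mod_cast hint2
  have hpn1 : ¬ p ∣ (n - 1) := by
    intro h
    have := Nat.dvd_sub hpn h
    rw [Nat.sub_sub_self (by omega)] at this
    exact hp.one_lt.ne' (Nat.dvd_one.mp this)
  have hcop2 : Nat.Coprime (p ^ 2) (n - 1) :=
    Nat.Coprime.pow_left 2 ((Nat.Prime.coprime_iff_not_dvd hp).mpr hpn1)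
  have hpsq_m : p ^ 2 ∣ m := (Nat.Coprime.dvd_of_dvd_mul_left hcop2 hnat2)
  have : p ∣ s := by
    have := hpsq_m
    rw [hm, pow_two] at this
    exact (Nat.mul_dvd_mul_iff_left hp.pos).mp this
  exact hps this

lemma carmichael_odd (n : ℕ) (hc : IsCarmichael n) : Odd n := by
  obtain ⟨hn1, hnp, hC⟩ := hc
  by_contra h
  have h2 : 2 ∣ n := (even_iff_two_dvd).mp (Nat.not_odd_iff_even.mp h)
  have hn2 : n ≠ 2 := fun h => hnp (h ▸ Nat.prime_two)
  have hn4 : 4 ≤ n := by omega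
  have hcop : Nat.Coprime (n - 1) n := by
    have h1 : n - (n - 1) = 1 := by omega
    have h2 := (Nat.coprime_sub_self_right (m := n - 1) (n := n) (by omega)).mp
    rw [h1] at h2
    exact h2 (Nat.coprime_one_right _)
  have hmod := hC (n - 1) hcop
  rw [pow_modEq_iff] at hmod
  have hcast : ((n - 1 : ℕ) : ZMod n) = -1 := by
    rw [Nat.cast_sub (by omega)]
    simp
  rw [hcast] at hmod
  have hodd : Odd (n - 1) := by
    exact Nat.Even.sub_odd (by omega) (even_iff_two_dvd.mpr h2) (by norm_num)
  rw [hodd.neg_one_pow] at hmod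
  have : ((2 : ℕ) : ZMod n) = 0 := by
    push_cast
    linear_combination -hmod
  rw [ZMod.natCast_eq_zero_iff] at this
  have := Nat.le_of_dvd (by norm_num) this
  omega

lemma one_add_sq_zero_pow {R : Type*} [CommRing R] (x : R) (hx : x * x = 0) (k : ℕ) :
    (1 + x) ^ k = 1 + k * x := by
  induction k with
  | zero => simp
  | succ k ih =>
    rw [pow_succ, ih]
    push_cast
    linear_combination (k : R) * hx


/-- If `n` is a Carmichael number all of whose prime factors `p` satisfy
`v₂(p - 1) = v₂(λ(n))`, then the index `(n-1)/λ(n)` is odd iff the number of prime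
factors of `n` is odd. -/
theorem index_parity (n : ℕ) (hc : IsCarmichael n)
    (hv : ∀ p ∈ n.primeFactors,
      padicValNat 2 (p - 1) = padicValNat 2 (carmichaelLambda n)) :
    (Odd ((n - 1) / carmichaelLambda n) ↔ Odd n.primeFactors.card) := by
  have hn1 : 1 < n := hc.1
  have hLpos : 0 < carmichaelLambda n := (carmichael_mem n hc).1
  have hLd : carmichaelLambda n ∣ n - 1 := carmichael_dvd n hc
  have hsq : Squarefree n := carmichael_squarefree n hc
  have hodd : Odd n := carmichael_odd n hc
  haveI : Fact (Nat.Prime 2) := ⟨Nat.prime_two⟩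
  set L := carmichaelLambda n with hLdef
  set e := padicValNat 2 L with he
  obtain ⟨p0, hp0⟩ := Nat.nonempty_primeFactors.mpr hn1
  have hp0p : p0.Prime := Nat.prime_of_mem_primeFactors hp0
  have hp0n : p0 ∣ n := Nat.dvd_of_mem_primeFactors hp0
  have hp0odd : p0 ≠ 2 := by
    rintro rfl
    exact (Nat.not_odd_iff_even.mpr (even_iff_two_dvd.mpr hp0n)) hodd
  have he1 : 1 ≤ e := by
    rw [← hv p0 hp0, ← padicValNat_dvd_iff_le (by have := hp0p.two_le; omega)]
    have h2 := hp0p.two_le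
    have hmod2 : p0 % 2 = 1 := Nat.odd_iff.mp (hp0p.odd_of_ne_two hp0odd)
    simpa using (by omega : 2 ∣ p0 - 1)
  set M := 2 ^ (e + 1) with hM
  haveI : NeZero M := ⟨by positivity⟩
  have hMdvd : ∀ z : ℕ, M ∣ 2 ^ e * z ↔ 2 ∣ z := by
    intro z
    rw [hM, pow_succ]
    exact Nat.mul_dvd_mul_iff_left (pow_pos two_pos e)
  have hxx : (2 : ZMod M) ^ e * (2 : ZMod M) ^ e = 0 := by
    have h0 : ((2 ^ (e + e) : ℕ) : ZMod M) = 0 := by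
      rw [ZMod.natCast_eq_zero_iff]
      exact pow_dvd_pow 2 (by omega)
    rw [← pow_add]
    exact_mod_cast h0
  have h2z : (2 : ZMod M) ^ e * 2 = 0 := by
    have h0 : ((2 ^ (e + 1) : ℕ) : ZMod M) = 0 := by
      rw [← hM]
      exact ZMod.natCast_self M
    rw [← pow_succ]
    exact_mod_cast h0
  have hkey : ∀ p ∈ n.primeFactors, ((p : ℕ) : ZMod M) = 1 + (2 : ZMod M) ^ e := by
    intro p hp
    have hpp := Nat.prime_of_mem_primeFactors hp
    have hpe : padicValNat 2 (p - 1) = e := hv p hp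
    have hp2 : p - 1 ≠ 0 := by have := hpp.two_le; omega
    have hdvd : 2 ^ e ∣ p - 1 := by rw [← hpe]; exact pow_padicValNat_dvd
    have hndvd : ¬ 2 ^ (e + 1) ∣ p - 1 := by rw [← hpe]; exact pow_succ_padicValNat_not_dvd hp2
    obtain ⟨u, hu⟩ := hdvd
    obtain ⟨t, ht⟩ : ∃ t, u = 2 * t + 1 := by
      rcases Nat.even_or_odd u with he' | ho
      · obtain ⟨t, ht⟩ := he'
        exact absurd ⟨t, by rw [hu, ht, pow_succ]; ring⟩ hndvd
      · exact ⟨u / 2, by have := Nat.odd_iff.mp ho; omega⟩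
    have h3 : p = 1 + 2 ^ e * (2 * t + 1) := by
      have h2 : p - 1 = 2 ^ e * (2 * t + 1) := by rw [hu, ht]
      have := hpp.two_le
      omega
    rw [h3]
    push_cast
    linear_combination (t : ZMod M) * h2z
  have hncast : ((n : ℕ) : ZMod M) = 1 + (n.primeFactors.card : ZMod M) * (2 : ZMod M) ^ e := by
    conv_lhs => rw [← Nat.prod_primeFactors_of_squarefree hsq]
    rw [Nat.cast_prod, Finset.prod_congr rfl hkey, Finset.prod_const]
    exact one_add_sq_zero_pow _ hxx _
  have hsub : ((n - 1 : ℕ) : ZMod M) = ((n.primeFactors.card * 2 ^ e : ℕ) : ZMod M) := by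
    rw [Nat.cast_sub (by omega), hncast]
    push_cast
    ring
  have hMn1 : M ∣ n - 1 ↔ 2 ∣ n.primeFactors.card := by
    rw [← ZMod.natCast_eq_zero_iff, hsub, ZMod.natCast_eq_zero_iff, mul_comm]
    exact hMdvd _
  obtain ⟨q, hq⟩ := hLd
  have hq' : (n - 1) / L = q := by rw [hq]; exact Nat.mul_div_cancel_left q hLpos
  obtain ⟨w, hw⟩ : 2 ^ e ∣ L := by rw [he]; exact pow_padicValNat_dvd
  have hwodd : ¬ 2 ∣ w := by
    intro h
    obtain ⟨w', hw'⟩ := h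
    have h4 : 2 ^ (e + 1) ∣ L := ⟨w', by rw [hw, hw', pow_succ]; ring⟩
    exact pow_succ_padicValNat_not_dvd (p := 2) (by omega : L ≠ 0) h4
  have hn1L : n - 1 = 2 ^ e * (w * q) := by rw [hq, hw]; ring
  have hML : M ∣ n - 1 ↔ 2 ∣ q := by
    rw [hn1L, hMdvd]
    constructor
    · intro h
      rcases (Nat.prime_two.dvd_mul).mp h with h | h
      · exact absurd h hwodd
      · exact h
    · exact fun h => h.mul_left w
  have hfinal : (2 ∣ q) ↔ (2 ∣ n.primeFactors.card) := hML.symm.trans hMn1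
  rw [hq', Nat.odd_iff, Nat.odd_iff]
  omega
end

section
/- Let n be a Carmichael number with odd index i(n) = (n−1)/λ(n), and let a be an integer coprime to n. If a^((n-1)/2) ≡ 1 (mod n) then a^(λ(n)/2) ≡ 1 (mod n), and if a^((n-1)/2) ≡ −1 (mod n) then a^(λ(n)/2) ≡ −1 (mod n). -/
open scoped Classical

private lemma carmichael_mem_iff (n : ℕ) (hn : 1 < n) (ℓ : ℕ) :
    (0 < ℓ ∧ ∀ a : ℕ, Nat.Coprime a n → a ^ ℓ ≡ 1 [MOD n]) ↔
    (0 < ℓ ∧ ∀ u : (ZMod n)ˣ, u ^ ℓ = 1) := by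
  haveI : NeZero n := ⟨by omega⟩
  constructor
  · rintro ⟨h0, h⟩
    refine ⟨h0, fun u => ?_⟩
    have hco := ZMod.val_coe_unit_coprime u
    have h1 := h _ hco
    have h2 : (((u : ZMod n).val : ℕ) : ZMod n) ^ ℓ = 1 := by
      have := (ZMod.natCast_eq_natCast_iff _ _ _).2 h1
      push_cast at this
      exact this
    have h3 : (((u : ZMod n).val : ℕ) : ZMod n) = (u : ZMod n) := by
      simp [ZMod.natCast_val, ZMod.cast_id]
    ext
    rw [Units.val_pow_eq_pow_val, ← h3, h2, Units.val_one]
  · rintro ⟨h0, h⟩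
    refine ⟨h0, fun a hco => ?_⟩
    have hu := h (ZMod.unitOfCoprime a hco)
    have : ((a : ZMod n)) ^ ℓ = 1 := by
      have := congrArg (Units.val) hu
      simpa [Units.val_pow_eq_pow_val, ZMod.coe_unitOfCoprime] using this
    have h4 : ((a ^ ℓ : ℕ) : ZMod n) = ((1 : ℕ) : ZMod n) := by push_cast; exact this
    exact (ZMod.natCast_eq_natCast_iff _ _ _).1 h4

/-- For a Carmichael number of odd index and `a` coprime to `n`:
if `a ^ ((n-1)/2) ≡ 1 (mod n)` then `a ^ (λ(n)/2) ≡ 1 (mod n)`, and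
if `a ^ ((n-1)/2) ≡ -1 (mod n)` then `a ^ (λ(n)/2) ≡ -1 (mod n)`. -/
theorem halfpow_of_odd_index (n : ℕ) (hc : IsCarmichael n)
    (hidx : Odd ((n - 1) / carmichaelLambda n))
    (a : ℤ) (ha : IsCoprime a (n : ℤ)) :
    (a ^ ((n - 1) / 2) ≡ 1 [ZMOD n] → a ^ (carmichaelLambda n / 2) ≡ 1 [ZMOD n]) ∧
    (a ^ ((n - 1) / 2) ≡ -1 [ZMOD n] → a ^ (carmichaelLambda n / 2) ≡ -1 [ZMOD n]) := by
  obtain ⟨hn1, hnp, hcar⟩ := hc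
  haveI : NeZero n := ⟨by omega⟩
  set L := carmichaelLambda n with hLdef
  set S : Set ℕ := {ℓ : ℕ | 0 < ℓ ∧ ∀ a : ℕ, Nat.Coprime a n → a ^ ℓ ≡ 1 [MOD n]} with hSdef
  have hSmem : (n - 1) ∈ S := ⟨by omega, hcar⟩
  have hLmem : L ∈ S := Nat.sInf_mem ⟨n - 1, hSmem⟩
  have hLu := ((carmichael_mem_iff n hn1 L).1 hLmem)
  obtain ⟨hL0, hLu⟩ := hLu
  have hn1u := ((carmichael_mem_iff n hn1 (n - 1)).1 hSmem).2
  -- L divides n - 1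
  have hdvd : L ∣ n - 1 := by
    by_contra hnd
    set r := (n - 1) % L with hr
    have hr0 : r ≠ 0 := fun h => hnd (Nat.dvd_of_mod_eq_zero h)
    have hrlt : r < L := Nat.mod_lt _ hL0
    have hru : ∀ u : (ZMod n)ˣ, u ^ r = 1 := by
      intro u
      have heq : n - 1 = L * ((n - 1) / L) + r := (Nat.div_add_mod (n-1) L).symm
      have : u ^ (n - 1) = u ^ (L * ((n - 1) / L) + r) := by rw [← heq]
      rw [hn1u u, pow_add, pow_mul, hLu u, one_pow, one_mul] at this
      exact this.symm
    have : r ∈ S := (carmichael_mem_iff n hn1 r).2 ⟨Nat.pos_of_ne_zero hr0, hru⟩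
    have hLS : L = sInf S := by rw [hSdef]; rfl
    have hle : sInf S ≤ r := Nat.sInf_le this
    rw [← hLS] at hle
    omega
  -- L is even
  have hLeven : Even L := by
    by_contra hodd
    have ho : Odd L := Nat.not_even_iff_odd.1 hodd
    have h1 := hLu (-1)
    have : ((-1 : (ZMod n)ˣ) : ZMod n) ^ L = 1 := by
      rw [← Units.val_pow_eq_pow_val, h1, Units.val_one]
    rw [Units.val_neg, Units.val_one, ho.neg_one_pow] at this
    have h2 : ((2 : ℕ) : ZMod n) = 0 := by
      push_cast
      linear_combination -this
    have := (ZMod.natCast_eq_zero_iff 2 n).1 h2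
    have h3 := Nat.le_of_dvd (by norm_num) this
    have hn2 : n = 2 := by omega
    rw [hn2] at hnp
    exact hnp Nat.prime_two
  -- a is a unit mod n
  have hA : IsUnit ((a : ZMod n)) := by
    have := ha.map (Int.castRingHom (ZMod n))
    simpa using (isCoprime_zero_right.mp (by simpa using this))
  set A : ZMod n := (a : ZMod n) with hAdef
  have hAL : A ^ L = 1 := by
    obtain ⟨u, hu⟩ := hA
    rw [← hu, ← Units.val_pow_eq_pow_val, hLu u, Units.val_one]
  -- arithmetic
  obtain ⟨i, hi⟩ := hdvd
  have hieq : i = (n - 1) / L := by rw [hi, Nat.mul_div_cancel_left _ hL0]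
  obtain ⟨k, hk⟩ := hidx
  rw [← hieq] at hk
  obtain ⟨m, hm⟩ := hLeven
  have hhalf : (n - 1) / 2 = m * i := by
    have h2 : n - 1 = 2 * (m * i) := by rw [hi, hm]; ring
    omega
  have hL2 : L / 2 = m := by omega
  -- key: A ^ ((n-1)/2) = A ^ (L/2)
  have hB2 : (A ^ m) ^ 2 = 1 := by
    rw [← pow_mul, show m * 2 = L by omega, hAL]
  have hkey : A ^ ((n - 1) / 2) = A ^ (L / 2) := by
    rw [hhalf, hL2, pow_mul, hk, pow_add, pow_mul, hB2, one_pow, pow_one, one_mul]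
  have hiff : ∀ c : ℤ, (a ^ ((n - 1) / 2) ≡ c [ZMOD n] ↔ a ^ (L / 2) ≡ c [ZMOD n]) := by
    intro c
    rw [← ZMod.intCast_eq_intCast_iff, ← ZMod.intCast_eq_intCast_iff]
    push_cast
    rw [← hAdef, hkey]
  exact ⟨fun h => (hiff 1).1 h, fun h => (hiff (-1)).1 h⟩
end

section
/- Let n_1 and n_2 be coprime Carmichael numbers, both of even index (class A). If min{v_2(n_1 − 1), v_2(n_2 − 1)} < max{v_2(λ(n_1)), v_2(λ(n_2))}, then the product n = n_1 n_2 is not a Carmichael number. -/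
open scoped Classical

lemma carmichael_gcd_closed {n L m : ℕ}
    (hL : ∀ a : ℕ, Nat.Coprime a n → a ^ L ≡ 1 [MOD n])
    (hm : ∀ a : ℕ, Nat.Coprime a n → a ^ m ≡ 1 [MOD n]) :
    ∀ a : ℕ, Nat.Coprime a n → a ^ Nat.gcd L m ≡ 1 [MOD n] := by
  intro a ha
  set u : (ZMod n)ˣ := ZMod.unitOfCoprime a ha with hu
  have key : ∀ k : ℕ, (∀ b : ℕ, Nat.Coprime b n → b ^ k ≡ 1 [MOD n]) → u ^ k = 1 := by
    intro k hk
    have h1 : ((a : ℕ) : ZMod n) ^ k = 1 := by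
      have := (ZMod.natCast_eq_natCast_iff _ _ _).mpr (hk a ha)
      push_cast at this
      exact this
    ext
    rw [Units.val_pow_eq_pow_val, ZMod.coe_unitOfCoprime]
    simpa using h1
  have hdL : orderOf u ∣ L := orderOf_dvd_of_pow_eq_one (key L hL)
  have hdm : orderOf u ∣ m := orderOf_dvd_of_pow_eq_one (key m hm)
  have hg : u ^ Nat.gcd L m = 1 :=
    orderOf_dvd_iff_pow_eq_one.mp (Nat.dvd_gcd hdL hdm)
  have : ((a : ℕ) : ZMod n) ^ Nat.gcd L m = 1 := by
    have := congrArg (Units.val) hg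
    rw [Units.val_pow_eq_pow_val, ZMod.coe_unitOfCoprime] at this
    simpa using this
  have : ((a ^ Nat.gcd L m : ℕ) : ZMod n) = ((1 : ℕ) : ZMod n) := by push_cast; simpa
  exact (ZMod.natCast_eq_natCast_iff _ _ _).mp this

lemma carmichaelLambda_dvd_s12 {n m : ℕ} (hm : 0 < m)
    (h : ∀ a : ℕ, Nat.Coprime a n → a ^ m ≡ 1 [MOD n]) :
    0 < carmichaelLambda n ∧ carmichaelLambda n ∣ m := by
  set S : Set ℕ := {ℓ : ℕ | 0 < ℓ ∧ ∀ a : ℕ, Nat.Coprime a n → a ^ ℓ ≡ 1 [MOD n]} with hS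
  have hmS : m ∈ S := ⟨hm, h⟩
  have hLS : carmichaelLambda n ∈ S := Nat.sInf_mem ⟨m, hmS⟩
  refine ⟨hLS.1, ?_⟩
  set L := carmichaelLambda n
  have hgS : Nat.gcd L m ∈ S :=
    ⟨Nat.gcd_pos_of_pos_right _ hm, carmichael_gcd_closed hLS.2 h⟩
  have h1 : L ≤ Nat.gcd L m := Nat.sInf_le hgS
  have h2 : Nat.gcd L m ≤ L := Nat.le_of_dvd hLS.1 (Nat.gcd_dvd_left _ _)
  have : Nat.gcd L m = L := le_antisymm h2 h1
  exact this ▸ Nat.gcd_dvd_right _ _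

lemma isCarmichael_odd {n : ℕ} (hc : IsCarmichael n) : Odd n := by
  obtain ⟨hn, hnp, h⟩ := hc
  rw [Nat.odd_iff]
  by_contra hpar
  have hco : Nat.Coprime (n - 1) n := by
    have hd := Nat.dvd_sub (Nat.gcd_dvd_right (n - 1) n) (Nat.gcd_dvd_left (n - 1) n)
    rw [(by omega : n - (n - 1) = 1)] at hd
    exact Nat.dvd_one.mp hd
  have hmod := h (n - 1) hco
  have : (((n - 1) ^ (n - 1) : ℕ) : ZMod n) = ((1 : ℕ) : ZMod n) :=
    (ZMod.natCast_eq_natCast_iff _ _ _).mpr hmod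
  have hne : ((n - 1 : ℕ) : ZMod n) = -1 := by
    have : ((n - 1 : ℕ) : ZMod n) = (n : ZMod n) - 1 := by
      push_cast [Nat.cast_sub (by omega : 1 ≤ n)]; ring
    rw [this, ZMod.natCast_self]; ring
  rw [Nat.cast_pow, hne, Nat.cast_one] at this
  have hodd : Odd (n - 1) := by
    rw [Nat.odd_iff]; omega
  rw [hodd.neg_one_pow] at this
  have h2 : ((2 : ℕ) : ZMod n) = 0 := by
    push_cast
    linear_combination (-1 : ZMod n) * this
  have hdvd : n ∣ 2 := (ZMod.natCast_eq_zero_iff _ _).mp h2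
  have hn2 : n = 2 := by
    have := Nat.le_of_dvd (by norm_num) hdvd
    omega
  exact hnp (hn2 ▸ Nat.prime_two)

lemma fermat_factor {n₁ n₂ : ℕ} (h1 : 1 < n₁) (h2 : 1 < n₂)
    (hcop : Nat.Coprime n₁ n₂)
    (h : ∀ a : ℕ, Nat.Coprime a (n₁ * n₂) → a ^ (n₁ * n₂ - 1) ≡ 1 [MOD n₁ * n₂]) :
    ∀ a : ℕ, Nat.Coprime a n₁ → a ^ (n₁ * n₂ - 1) ≡ 1 [MOD n₁] := by
  intro a ha
  haveI : NeZero n₁ := ⟨by omega⟩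
  haveI : NeZero n₂ := ⟨by omega⟩
  obtain ⟨b, hb1, hb2⟩ := Nat.chineseRemainder hcop a 1
  have hb1' : (b : ZMod n₁) = (a : ZMod n₁) := (ZMod.natCast_eq_natCast_iff _ _ _).mpr hb1
  have hb2' : (b : ZMod n₂) = ((1 : ℕ) : ZMod n₂) := (ZMod.natCast_eq_natCast_iff _ _ _).mpr hb2
  have hbc1 : Nat.Coprime b n₁ := by
    rw [← ZMod.isUnit_iff_coprime, hb1', ZMod.isUnit_iff_coprime]
    exact ha
  have hbc2 : Nat.Coprime b n₂ := by
    rw [← ZMod.isUnit_iff_coprime, hb2', ZMod.isUnit_iff_coprime]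
    exact Nat.coprime_one_left n₂
  have hbc : Nat.Coprime b (n₁ * n₂) := Nat.Coprime.mul_right hbc1 hbc2
  have := (h b hbc).of_dvd (dvd_mul_right n₁ n₂)
  calc a ^ (n₁ * n₂ - 1) ≡ b ^ (n₁ * n₂ - 1) [MOD n₁] := (hb1.symm.pow _)
    _ ≡ 1 [MOD n₁] := this

/-- Key valuation argument: if `λ₂ ∣ n₂ - 1`, `λ₂ ∣ n₁ n₂ - 1`, `n₂` odd, and
`v₂(n₁-1) < v₂(λ₂)`, we get a contradiction. -/
lemma key_valuation {n₁ n₂ lam : ℕ} (h1 : 1 < n₁) (h2 : 1 < n₂) (hodd₂ : Odd n₂)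
    (hlpos : 0 < lam) (hl2 : lam ∣ n₂ - 1) (hlN : lam ∣ n₁ * n₂ - 1)
    (hlt : padicValNat 2 (n₁ - 1) < padicValNat 2 lam) : False := by
  haveI : Fact (Nat.Prime 2) := ⟨Nat.prime_two⟩
  set e₁ := padicValNat 2 (n₁ - 1)
  have hn1ne : n₁ - 1 ≠ 0 := by omega
  have hn2ne : n₂ - 1 ≠ 0 := by omega
  -- 2^(e₁+1) divides lam
  have hd1 : (2 : ℕ) ^ (e₁ + 1) ∣ lam :=
    (pow_dvd_pow 2 hlt).trans pow_padicValNat_dvd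
  have hdN : (2 : ℕ) ^ (e₁ + 1) ∣ n₁ * n₂ - 1 := hd1.trans hlN
  have hd2 : (2 : ℕ) ^ (e₁ + 1) ∣ n₂ - 1 := hd1.trans hl2
  have hsplit : n₁ * n₂ - 1 = n₂ * (n₁ - 1) + (n₂ - 1) := by
    have hmul : n₂ ≤ n₁ * n₂ := Nat.le_mul_of_pos_left _ (by omega)
    rw [Nat.mul_sub, Nat.mul_one, mul_comm n₂ n₁]
    omega
  have hdd : (2 : ℕ) ^ (e₁ + 1) ∣ n₂ * (n₁ - 1) := by
    rw [hsplit] at hdN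
    exact (Nat.dvd_add_iff_left hd2).mpr hdN
  have hcop : Nat.Coprime (2 ^ (e₁ + 1)) n₂ := by
    apply Nat.Coprime.pow_left
    rw [Nat.coprime_two_left]
    exact hodd₂
  have hfin : (2 : ℕ) ^ (e₁ + 1) ∣ n₁ - 1 := hcop.dvd_of_dvd_mul_left hdd
  exact pow_succ_padicValNat_not_dvd hn1ne hfin

/-- If `n₁, n₂` are coprime class-A Carmichael numbers with
`min{v₂(n₁-1), v₂(n₂-1)} < max{v₂(λ(n₁)), v₂(λ(n₂))}`, then `n₁ n₂` is not a
Carmichael number. -/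
theorem product_not_carmichael_of_classA (n₁ n₂ : ℕ)
    (hc₁ : IsCarmichael n₁) (hc₂ : IsCarmichael n₂) (hcop : Nat.Coprime n₁ n₂)
    (he₁ : Even ((n₁ - 1) / carmichaelLambda n₁))
    (he₂ : Even ((n₂ - 1) / carmichaelLambda n₂))
    (hv : min (padicValNat 2 (n₁ - 1)) (padicValNat 2 (n₂ - 1)) <
      max (padicValNat 2 (carmichaelLambda n₁)) (padicValNat 2 (carmichaelLambda n₂))) :
    ¬ IsCarmichael (n₁ * n₂) := by
  intro h
  haveI : Fact (Nat.Prime 2) := ⟨Nat.prime_two⟩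
  obtain ⟨hn₁, hp₁, hf₁⟩ := hc₁
  obtain ⟨hn₂, hp₂, hf₂⟩ := hc₂
  have hNpos : 0 < n₁ * n₂ - 1 := by
    have : 2 * 2 ≤ n₁ * n₂ := Nat.mul_le_mul hn₁ hn₂
    omega
  -- λᵢ divides nᵢ - 1
  obtain ⟨hl₁pos, hl₁dvd⟩ := carmichaelLambda_dvd_s12 (n := n₁) (by omega) hf₁
  obtain ⟨hl₂pos, hl₂dvd⟩ := carmichaelLambda_dvd_s12 (n := n₂) (by omega) hf₂
  -- λᵢ divides n₁ n₂ - 1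
  have hcrt₁ := fermat_factor hn₁ hn₂ hcop h.2.2
  have hcrt₂ : ∀ a : ℕ, Nat.Coprime a n₂ → a ^ (n₁ * n₂ - 1) ≡ 1 [MOD n₂] := by
    have h' : ∀ a : ℕ, Nat.Coprime a (n₂ * n₁) → a ^ (n₂ * n₁ - 1) ≡ 1 [MOD n₂ * n₁] := by
      rw [mul_comm]; exact h.2.2
    have := fermat_factor hn₂ hn₁ hcop.symm h'
    rwa [mul_comm n₂ n₁] at this
  obtain ⟨-, hl₁N⟩ := carmichaelLambda_dvd_s12 (n := n₁) hNpos hcrt₁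
  obtain ⟨-, hl₂N⟩ := carmichaelLambda_dvd_s12 (n := n₂) hNpos hcrt₂
  -- valuations
  have h₁ : padicValNat 2 (carmichaelLambda n₁) ≤ padicValNat 2 (n₁ - 1) :=
    (padicValNat_dvd_iff_le (by omega)).mp (pow_padicValNat_dvd.trans hl₁dvd)
  have h₂ : padicValNat 2 (carmichaelLambda n₂) ≤ padicValNat 2 (n₂ - 1) :=
    (padicValNat_dvd_iff_le (by omega)).mp (pow_padicValNat_dvd.trans hl₂dvd)
  have hcases : padicValNat 2 (n₁ - 1) < padicValNat 2 (carmichaelLambda n₂) ∨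
      padicValNat 2 (n₂ - 1) < padicValNat 2 (carmichaelLambda n₁) := by omega
  rcases hcases with hlt | hlt
  · exact key_valuation hn₁ hn₂ (isCarmichael_odd ⟨hn₂, hp₂, hf₂⟩) hl₂pos hl₂dvd hl₂N hlt
  · have hl₁N' : carmichaelLambda n₁ ∣ n₂ * n₁ - 1 := by rwa [mul_comm n₂ n₁]
    exact key_valuation hn₂ hn₁ (isCarmichael_odd ⟨hn₁, hp₁, hf₁⟩) hl₁pos hl₁dvd hl₁N' hlt
end

section
/- Let n_1 be a Carmichael number of even index (class A) and n_2 a Carmichael number of odd index (class B), with gcd(n_1, n_2) = 1. If v_2(n_1 − 1) < v_2(n_2 − 1), then the product n = n_1 n_2 is not a Carmichael number. -/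
open scoped Classical

lemma forall_pow_modEq_iff (n ℓ : ℕ) [NeZero n] :
    (∀ a : ℕ, Nat.Coprime a n → a ^ ℓ ≡ 1 [MOD n]) ↔ ∀ u : (ZMod n)ˣ, u ^ ℓ = 1 := by
  constructor
  · intro h u
    have hco := ZMod.val_coe_unit_coprime u
    have h1 := h _ hco
    have h2 : (((u : ZMod n).val : ℕ) : ZMod n) ^ ℓ = 1 := by
      have h3 := (ZMod.natCast_eq_natCast_iff _ _ _).mpr h1
      push_cast at h3
      simpa using h3
    rw [ZMod.natCast_val, ZMod.cast_id] at h2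
    ext
    push_cast
    exact h2
  · intro h a ha
    have h1 := congrArg (Units.val) (h (ZMod.unitOfCoprime a ha))
    have h2 : ((a : ℕ) : ZMod n) ^ ℓ = 1 := by
      simpa [ZMod.coe_unitOfCoprime] using h1
    have h3 : (((a ^ ℓ : ℕ) : ZMod n)) = ((1 : ℕ) : ZMod n) := by
      push_cast; simpa using h2
    exact (ZMod.natCast_eq_natCast_iff _ _ _).mp h3

lemma carmichaelLambda_eq_exponent (n : ℕ) [NeZero n] :
    carmichaelLambda n = Monoid.exponent (ZMod n)ˣ := by
  set e := Monoid.exponent (ZMod n)ˣ with he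
  have hpos : 0 < e := Monoid.ExponentExists.exponent_pos (Monoid.ExponentExists.of_finite)
  have hmem : e ∈ {ℓ : ℕ | 0 < ℓ ∧ ∀ a : ℕ, Nat.Coprime a n → a ^ ℓ ≡ 1 [MOD n]} :=
    ⟨hpos, (forall_pow_modEq_iff n e).mpr fun u => Monoid.pow_exponent_eq_one u⟩
  refine le_antisymm (Nat.sInf_le hmem) (le_csInf ⟨e, hmem⟩ ?_)
  rintro ℓ ⟨hℓ, h⟩
  exact Nat.le_of_dvd hℓ
    (Monoid.exponent_dvd_of_forall_pow_eq_one ((forall_pow_modEq_iff n ℓ).mp h))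

/-- If `n₁` is a class-A Carmichael number, `n₂` a class-B Carmichael number,
`gcd(n₁, n₂) = 1` and `v₂(n₁-1) < v₂(n₂-1)`, then `n₁ n₂` is not a Carmichael
number. -/
theorem product_not_carmichael_of_classA_classB (n₁ n₂ : ℕ)
    (hc₁ : IsCarmichael n₁) (hc₂ : IsCarmichael n₂) (hcop : Nat.gcd n₁ n₂ = 1)
    (he₁ : Even ((n₁ - 1) / carmichaelLambda n₁))
    (ho₂ : Odd ((n₂ - 1) / carmichaelLambda n₂))
    (hv : padicValNat 2 (n₁ - 1) < padicValNat 2 (n₂ - 1)) :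
    ¬ IsCarmichael (n₁ * n₂) := by
  intro h
  have hn1 : 1 < n₁ := hc₁.1
  have hn2 : 1 < n₂ := hc₂.1
  have : NeZero n₁ := ⟨by omega⟩
  have : NeZero n₂ := ⟨by omega⟩
  have : NeZero (n₁ * n₂) := ⟨by positivity⟩
  have h2 : Fact (Nat.Prime 2) := ⟨Nat.prime_two⟩
  have hLe : carmichaelLambda n₂ = Monoid.exponent (ZMod n₂)ˣ :=
    carmichaelLambda_eq_exponent n₂
  have hLpos : 0 < carmichaelLambda n₂ := by
    rw [hLe]; exact Monoid.ExponentExists.exponent_pos (Monoid.ExponentExists.of_finite)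
  have hLdvd : carmichaelLambda n₂ ∣ n₂ - 1 := by
    rw [hLe]
    exact Monoid.exponent_dvd_of_forall_pow_eq_one
      ((forall_pow_modEq_iff n₂ (n₂ - 1)).mp hc₂.2.2)
  -- v₂(λ₂) = v₂(n₂-1)
  obtain ⟨q, hq⟩ := hLdvd
  have hqodd : Odd q := by
    rwa [hq, Nat.mul_div_cancel_left _ hLpos] at ho₂
  have hq0 : q ≠ 0 := by rintro rfl; simp at hqodd
  have hvq : padicValNat 2 q = 0 :=
    padicValNat.eq_zero_of_not_dvd (by
      rw [Nat.two_dvd_ne_zero]; exact Nat.odd_iff.mp hqodd)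
  have hvL : padicValNat 2 (n₂ - 1) = padicValNat 2 (carmichaelLambda n₂) := by
    rw [hq, padicValNat.mul (by omega) hq0, hvq, Nat.add_zero]
  -- λ₂ divides n₁ * n₂ - 1
  have hLdvdN : carmichaelLambda n₂ ∣ n₁ * n₂ - 1 := by
    rw [hLe]
    refine dvd_trans (MonoidHom.exponent_dvd (ZMod.unitsMap_surjective (dvd_mul_left n₂ n₁))) ?_
    exact Monoid.exponent_dvd_of_forall_pow_eq_one
      ((forall_pow_modEq_iff (n₁ * n₂) (n₁ * n₂ - 1)).mp h.2.2)
  -- v₂(n₁n₂ - 1) = v₂(n₁ - 1)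
  have hN1 : (0:ℕ) < n₁ * n₂ - 1 := by
    have h4 : 2 * 2 ≤ n₁ * n₂ := Nat.mul_le_mul hn1 hn2
    omega
  have hsum : n₁ * n₂ - 1 = (n₁ - 1) + n₁ * (n₂ - 1) := by
    obtain ⟨m, rfl⟩ : ∃ m, n₂ = m + 1 := ⟨n₂ - 1, by omega⟩
    rw [Nat.mul_succ]
    simp only [Nat.add_sub_cancel]
    omega
  have hdk : (2:ℕ) ^ padicValNat 2 (n₁ - 1) ∣ n₁ - 1 := pow_padicValNat_dvd
  have hdk1 : (2:ℕ) ^ (padicValNat 2 (n₁ - 1) + 1) ∣ n₂ - 1 := by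
    rw [padicValNat_dvd_iff_le (by omega)]; omega
  have hnd : ¬ (2:ℕ) ^ (padicValNat 2 (n₁ - 1) + 1) ∣ n₁ - 1 := by
    rw [padicValNat_dvd_iff_le (by omega)]; omega
  have hmul : (2:ℕ) ^ (padicValNat 2 (n₁ - 1) + 1) ∣ n₁ * (n₂ - 1) :=
    Dvd.dvd.mul_left hdk1 n₁
  have hd : (2:ℕ) ^ padicValNat 2 (n₁ - 1) ∣ n₁ * n₂ - 1 := by
    rw [hsum]
    exact Nat.dvd_add hdk (dvd_trans (pow_dvd_pow 2 (Nat.le_succ _)) hmul)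
  have hnd' : ¬ (2:ℕ) ^ (padicValNat 2 (n₁ - 1) + 1) ∣ n₁ * n₂ - 1 := by
    rw [hsum]
    intro hcon
    have := Nat.dvd_sub hcon hmul
    rw [Nat.add_sub_cancel] at this
    exact hnd this
  rw [padicValNat_dvd_iff_le (by omega)] at hd hnd'
  have hle : padicValNat 2 (carmichaelLambda n₂) ≤ padicValNat 2 (n₁ * n₂ - 1) := by
    refine (padicValNat_dvd_iff_le (by omega)).mp ?_
    exact dvd_trans pow_padicValNat_dvd hLdvdN
  omega
end

section
/- Let a be a prime and let b be the next prime after a. Let n_1 and n_2 be Carmichael numbers of even index (class A), each an Euler pseudoprime to every prime base p with p ≤ a but not to base b, and with gcd(b, n_1) = gcd(b, n_2) = 1. If the product n = n_1 n_2 is a Carmichael number of even index (class A), then n is an Euler pseudoprime to every prime base p with p ≤ b. -/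
open scoped Classical

private lemma unit_pow_of_forall {n ℓ : ℕ} [NeZero n]
    (h : ∀ a : ℕ, Nat.Coprime a n → a ^ ℓ ≡ 1 [MOD n]) (u : (ZMod n)ˣ) : u ^ ℓ = 1 := by
  have hco := ZMod.val_coe_unit_coprime u
  have h2 := (ZMod.natCast_eq_natCast_iff _ _ _).mpr (h _ hco)
  push_cast at h2
  rw [ZMod.natCast_zmod_val] at h2
  ext
  simpa using h2

private lemma carm_four_le {n : ℕ} (hc : IsCarmichael n) : 4 ≤ n := by
  obtain ⟨h1, h2, _⟩ := hc
  by_contra h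
  interval_cases n
  · exact h2 Nat.prime_two
  · exact h2 Nat.prime_three

private lemma carm_unit_pow {n : ℕ} (hc : IsCarmichael n) (u : (ZMod n)ˣ) :
    u ^ (n - 1) = 1 := by
  haveI : NeZero n := ⟨by have := hc.1; omega⟩
  exact unit_pow_of_forall hc.2.2 u

private lemma keyA {n : ℕ} (hc : IsCarmichael n) (he : Even ((n - 1) / carmichaelLambda n)) :
    ∀ x : ℕ, Nat.Coprime x n → x ^ ((n - 1) / 2) ≡ 1 [MOD n] := by
  haveI : NeZero n := ⟨by have := hc.1; omega⟩
  set S := {ℓ : ℕ | 0 < ℓ ∧ ∀ a : ℕ, Nat.Coprime a n → a ^ ℓ ≡ 1 [MOD n]} with hS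
  set E := Monoid.exponent (ZMod n)ˣ with hE
  have hmem : ∀ ℓ : ℕ, ℓ ∈ S ↔ 0 < ℓ ∧ E ∣ ℓ := by
    intro ℓ
    constructor
    · rintro ⟨hpos, hall⟩
      exact ⟨hpos, Monoid.exponent_dvd_of_forall_pow_eq_one (unit_pow_of_forall hall)⟩
    · rintro ⟨hpos, ⟨k, hk⟩⟩
      refine ⟨hpos, fun a hco => ?_⟩
      have hu : (ZMod.unitOfCoprime a hco) ^ ℓ = 1 := by
        rw [hk, pow_mul, Monoid.pow_exponent_eq_one, one_pow]
      have hu' : ((a : ZMod n)) ^ ℓ = 1 := by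
        have := congrArg (Units.val) hu
        simpa [ZMod.coe_unitOfCoprime] using this
      rw [← ZMod.natCast_eq_natCast_iff]
      push_cast
      exact hu'
  have hEpos : 0 < E := Nat.pos_of_ne_zero Monoid.exponent_ne_zero_of_finite
  have hn1 : n - 1 ∈ S := ⟨by have := hc.1; omega, hc.2.2⟩
  have hlam : carmichaelLambda n ∈ S := Nat.sInf_mem ⟨n - 1, hn1⟩
  have hEdvd : E ∣ carmichaelLambda n := ((hmem _).mp hlam).2
  have hES : E ∈ S := (hmem E).mpr ⟨hEpos, dvd_rfl⟩
  have hle : carmichaelLambda n ≤ E := Nat.sInf_le hES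
  have hEeq : carmichaelLambda n = E :=
    le_antisymm hle (Nat.le_of_dvd ((hmem _).mp hlam).1 hEdvd)
  have hdvd : carmichaelLambda n ∣ n - 1 := hEeq ▸ ((hmem _).mp hn1).2
  obtain ⟨r, hr⟩ := he
  have hmul : (r + r) * carmichaelLambda n = n - 1 := by
    rw [← hr]; exact Nat.div_mul_cancel hdvd
  have hhalf : (n - 1) / 2 = carmichaelLambda n * r := by
    have h2 : n - 1 = 2 * (carmichaelLambda n * r) := by rw [← hmul]; ring
    omega
  intro x hco
  rw [hhalf, pow_mul]
  calc (x ^ carmichaelLambda n) ^ r ≡ 1 ^ r [MOD n] := (hlam.2 x hco).pow r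
    _ = 1 := one_pow r

private lemma int_pow_one {n x : ℕ} (hc : IsCarmichael n)
    (he : Even ((n - 1) / carmichaelLambda n)) (hco : Nat.Coprime x n) :
    (x : ℤ) ^ ((n - 1) / 2) ≡ 1 [ZMOD n] := by
  have h := Int.natCast_modEq_iff.mpr (keyA hc he x hco)
  push_cast at h
  exact h

private lemma jacobi_pm {p n : ℕ} (hco : Nat.Coprime p n) :
    jacobiSym (p : ℤ) n = 1 ∨ jacobiSym (p : ℤ) n = -1 := by
  apply jacobiSym.eq_one_or_neg_one
  rwa [Int.gcd_natCast_natCast]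

private lemma jacobi_eq_one {n p : ℕ} (hc : IsCarmichael n)
    (he : Even ((n - 1) / carmichaelLambda n)) (hco : Nat.Coprime p n)
    (h : jacobiSym (p : ℤ) n ≡ (p : ℤ) ^ ((n - 1) / 2) [ZMOD n]) :
    jacobiSym (p : ℤ) n = 1 := by
  have h4 := carm_four_le hc
  rcases jacobi_pm hco with h1 | h1
  · exact h1
  · exfalso
    have h2 : (-1 : ℤ) ≡ 1 [ZMOD n] := h1 ▸ h.trans (int_pow_one hc he hco)
    have h3 : (n : ℤ) ∣ 2 := by
      have := Int.ModEq.dvd h2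
      simpa using this
    have : n ∣ 2 := by exact_mod_cast h3
    have := Nat.le_of_dvd (by norm_num) this
    omega

private lemma jacobi_eq_neg_one {n p : ℕ} (hc : IsCarmichael n)
    (he : Even ((n - 1) / carmichaelLambda n)) (hco : Nat.Coprime p n)
    (h : ¬ (jacobiSym (p : ℤ) n ≡ (p : ℤ) ^ ((n - 1) / 2) [ZMOD n])) :
    jacobiSym (p : ℤ) n = -1 := by
  rcases jacobi_pm hco with h1 | h1
  · exact absurd (h1 ▸ (int_pow_one hc he hco).symm) h
  · exact h1

private lemma coprime_of_pass {n p : ℕ} (hc : IsCarmichael n) (hp : p.Prime)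
    (h : jacobiSym (p : ℤ) n ≡ (p : ℤ) ^ ((n - 1) / 2) [ZMOD n]) :
    Nat.Coprime p n := by
  haveI : NeZero n := ⟨by have := hc.1; omega⟩
  by_contra hco0
  have hco : p ∣ n := by
    rwa [Nat.Prime.coprime_iff_not_dvd hp, not_not] at hco0
  have hz : jacobiSym (p : ℤ) n = 0 := by
    rw [jacobiSym.eq_zero_iff_not_coprime, Int.gcd_natCast_natCast]
    exact hco0
  rw [hz] at h
  have hdvd : (n : ℤ) ∣ (p : ℤ) ^ ((n - 1) / 2) := (Int.modEq_zero_iff_dvd).mp h.symm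
  have hdvd' : n ∣ p ^ ((n - 1) / 2) := by exact_mod_cast hdvd
  -- n divides a prime power: contradiction
  obtain ⟨j, hj, hnj⟩ := (Nat.dvd_prime_pow hp).mp hdvd'
  have h4 := carm_four_le hc
  have hj2 : 2 ≤ j := by
    rcases j with _ | _ | j
    · simp at hnj; omega
    · rw [pow_one] at hnj; exact absurd (hnj ▸ hp) hc.2.1
    · omega
  have hpd : p ∣ Nat.totient n := by
    rw [hnj, Nat.totient_prime_pow hp (by omega)]
    exact Dvd.dvd.mul_right (dvd_pow_self p (by omega)) _
  have hcard : p ∣ Fintype.card (ZMod n)ˣ := by rwa [ZMod.card_units_eq_totient]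
  haveI : Fact p.Prime := ⟨hp⟩
  obtain ⟨g, hg⟩ := exists_prime_orderOf_dvd_card p hcard
  have hg1 : g ^ (n - 1) = 1 := carm_unit_pow hc g
  have hdv : p ∣ n - 1 := hg ▸ orderOf_dvd_of_pow_eq_one hg1
  have hpn : p ∣ n := hnj ▸ dvd_pow_self p (by omega)
  have : p ∣ n - (n - 1) := Nat.dvd_sub hpn hdv
  have h1 : n - (n - 1) = 1 := by omega
  rw [h1] at this
  exact hp.one_lt.ne' (Nat.dvd_one.mp this)

/-- If `a` is prime, `b` the next prime after `a`, and `n₁, n₂` are class-A Carmichael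
numbers coprime to `b` which pass the Euler criterion for every prime base `p ≤ a` but
fail it for base `b`, then if `n = n₁ n₂` is a class-A Carmichael number it passes the
Euler criterion for every prime base `p ≤ b`. -/
theorem product_survives_next_base (a b : ℕ) (ha : a.Prime) (hb : b.Prime) (hab : a < b)
    (hnext : ∀ q : ℕ, a < q → q < b → ¬ q.Prime)
    (n₁ n₂ : ℕ) (hc₁ : IsCarmichael n₁) (hc₂ : IsCarmichael n₂)
    (he₁ : Even ((n₁ - 1) / carmichaelLambda n₁))
    (he₂ : Even ((n₂ - 1) / carmichaelLambda n₂))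
    (hp₁ : ∀ p : ℕ, p.Prime → p ≤ a →
      jacobiSym (p : ℤ) n₁ ≡ (p : ℤ) ^ ((n₁ - 1) / 2) [ZMOD n₁])
    (hp₂ : ∀ p : ℕ, p.Prime → p ≤ a →
      jacobiSym (p : ℤ) n₂ ≡ (p : ℤ) ^ ((n₂ - 1) / 2) [ZMOD n₂])
    (hfail₁ : ¬ (jacobiSym (b : ℤ) n₁ ≡ (b : ℤ) ^ ((n₁ - 1) / 2) [ZMOD n₁]))
    (hfail₂ : ¬ (jacobiSym (b : ℤ) n₂ ≡ (b : ℤ) ^ ((n₂ - 1) / 2) [ZMOD n₂]))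
    (hg₁ : Nat.gcd b n₁ = 1) (hg₂ : Nat.gcd b n₂ = 1)
    (hn : IsCarmichael (n₁ * n₂))
    (hne : Even ((n₁ * n₂ - 1) / carmichaelLambda (n₁ * n₂))) :
    ∀ p : ℕ, p.Prime → p ≤ b →
      jacobiSym (p : ℤ) (n₁ * n₂) ≡ (p : ℤ) ^ ((n₁ * n₂ - 1) / 2) [ZMOD (n₁ * n₂)] := by
  intro p hp hpb
  have h4₁ := carm_four_le hc₁
  have h4₂ := carm_four_le hc₂
  have hmul : jacobiSym (p : ℤ) (n₁ * n₂) = jacobiSym (p : ℤ) n₁ * jacobiSym (p : ℤ) n₂ :=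
    jacobiSym.mul_right' _ (by omega) (by omega)
  have key : jacobiSym (p : ℤ) n₁ * jacobiSym (p : ℤ) n₂ = 1 ∧ Nat.Coprime p (n₁ * n₂) := by
    by_cases hpeq : p = b
    · subst hpeq
      have hco₁ : Nat.Coprime p n₁ := hg₁
      have hco₂ : Nat.Coprime p n₂ := hg₂
      rw [jacobi_eq_neg_one hc₁ he₁ hco₁ hfail₁, jacobi_eq_neg_one hc₂ he₂ hco₂ hfail₂]
      exact ⟨by norm_num, Nat.Coprime.mul_right hco₁ hco₂⟩
    · have hpa : p ≤ a := by
        by_contra hpa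
        exact hnext p (by omega) (by omega) hp
      have h₁ := hp₁ p hp hpa
      have h₂ := hp₂ p hp hpa
      have hco₁ : Nat.Coprime p n₁ := coprime_of_pass hc₁ hp h₁
      have hco₂ : Nat.Coprime p n₂ := coprime_of_pass hc₂ hp h₂
      rw [jacobi_eq_one hc₁ he₁ hco₁ h₁, jacobi_eq_one hc₂ he₂ hco₂ h₂]
      exact ⟨by norm_num, Nat.Coprime.mul_right hco₁ hco₂⟩
  rw [hmul, key.1]
  exact (int_pow_one hn hne key.2).symm
end

section
/- Let p_1 > 3 be a prime such that p_2 = 2p_1 − 1 is also prime, and let n = p_1 p_2. Then the number of Euler liars for n in (Z/nZ)* is exactly φ(n)/4, and among these Euler liars exactly half have Jacobi symbol (a/n) = 1 and half have (a/n) = −1. -/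
/-! Write `p₁ = 2q + 1` and `p₂ = 4q + 1`, so that `(n - 1) / 2 = q + 2q·p₁ = 3q + 4q·q`.
By Fermat and Euler's criterion, modulo `p₁` the power `a ^ ((n - 1) / 2)` is `a ^ q ≡ (a/p₁)`,
and modulo `p₂` it is `a ^ (2q) · a ^ q ≡ (a/p₂) · a ^ q`. Comparing with
`(a/n) = (a/p₁)(a/p₂)` modulo both primes, `a` is an Euler liar with `(a/n) = ε = ±1` exactly
when `a ^ q ≡ ε` modulo `p₁` and modulo `p₂`. In the cyclic groups `(ℤ/p₁)ˣ` and `(ℤ/p₂)ˣ`, of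
orders `2q` and `4q`, each equation `x ^ q = ε` has `q` solutions, so by the Chinese remainder
theorem there are `q²` liars of each sign, against `φ(n) = 8q²`. -/

open scoped Classical

open Finset

universe u

/- In the statement, `(eulerLiars n).filter (fun a => jacobiSym (a : ℤ) n = 1)` filters the image
of `eulerLiars n` in `Finset ℤ`, which the coercion builds through the `Finset` monad. -/
theorem Finset.card_filter_bind_pure_of_injective {α β : Type u} {f : α → β}
    (hf : Function.Injective f) (s : Finset α) (P : β → Prop) [DecidablePred P] :
    #((s >>= fun a => pure (f a)).filter P) = #(s.filter fun a => P (f a)) := by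
  rw [bind_pure_comp, fmap_def, filter_image, card_image_of_injective _ hf]

theorem FiniteField.card_filter_pow_eq_one {F : Type*} [Field F] [Fintype F] [DecidableEq F]
    {d : ℕ} (hd : d ∣ Fintype.card F - 1) : #{x : F | x ^ d = 1} = d := by
  have hF : 0 < Fintype.card F - 1 := by have := Fintype.one_lt_card (α := F); omega
  obtain ⟨g, hg⟩ := IsCyclic.exists_ofOrder_eq_natCard (α := Fˣ)
  rw [Nat.card_eq_fintype_card, Fintype.card_units] at hg
  have hζ : IsPrimitiveRoot (g : F) (Fintype.card F - 1) := by
    simpa only [orderOf_units, hg] using IsPrimitiveRoot.orderOf (g : F)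
  obtain ⟨c, hc⟩ := hd
  have hd0 : 0 < d := Nat.pos_of_mul_pos_right (hc ▸ hF)
  have hζc : IsPrimitiveRoot ((g : F) ^ c) d := hζ.pow hF (by rw [hc, mul_comm])
  convert hζc.card_nthRootsFinset using 2
  ext x
  simp [Polynomial.mem_nthRootsFinset hd0]

theorem FiniteField.card_filter_pow_eq_of_isUnit {F : Type*} [Field F] [Fintype F]
    [DecidableEq F] (hF : ringChar F ≠ 2) {ε : ℤ} (hε : IsUnit ε) {d : ℕ}
    (hd : 2 * d ∣ Fintype.card F - 1) : #{x : F | x ^ d = ε} = d := by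
  have hroots : #{x : F | x ^ d = 1} = d :=
    card_filter_pow_eq_one (dvd_trans (dvd_mul_left d 2) hd)
  rcases Int.isUnit_iff.mp hε with rfl | rfl
  · simpa using hroots
  have hsplit : univ.filter (fun x : F => x ^ (2 * d) = 1) =
      univ.filter (fun x : F => x ^ d = 1) ∪ univ.filter (fun x : F => x ^ d = -1) := by
    rw [← filter_or]
    refine filter_congr fun x _ => ?_
    rw [mul_comm, pow_mul, sq, mul_self_eq_one_iff]
  have hdisj :
      Disjoint (univ.filter fun x : F => x ^ d = 1) (univ.filter fun x : F => x ^ d = -1) :=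
    disjoint_filter.mpr fun x _ h1 h2 => Ring.neg_one_ne_one_of_char_ne_two hF (h2.symm.trans h1)
  have := card_filter_pow_eq_one hd
  rw [hsplit, card_union_of_disjoint hdisj, hroots] at this
  push_cast
  omega

theorem ZMod.card_filter_range_natCast (N : ℕ) [NeZero N] (R : ZMod N → Prop) [DecidablePred R] :
    #((range N).filter fun a : ℕ => R a) = #{x : ZMod N | R x} := by
  refine card_nbij' (fun a => (a : ZMod N)) ZMod.val ?_ ?_ ?_ ?_
  · intro a ha
    simpa using (mem_filter.mp ha).2
  · intro x hx
    simpa [ZMod.val_lt] using (mem_filter.mp hx).2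
  · intro a ha
    exact ZMod.val_cast_of_lt (mem_range.mp (mem_filter.mp ha).1)
  · intro x _
    exact ZMod.natCast_zmod_val x

theorem ZMod.card_filter_range_mul {m n : ℕ} [NeZero m] [NeZero n] (hmn : m.Coprime n)
    (P : ZMod m → Prop) (Q : ZMod n → Prop) [DecidablePred P] [DecidablePred Q] :
    #((range (m * n)).filter fun a : ℕ => P a ∧ Q a) =
      #{x : ZMod m | P x} * #{y : ZMod n | Q y} := by
  let e := ZMod.chineseRemainder hmn
  rw [← card_product, ← filter_product, univ_product_univ,
    ← card_equiv e.toEquiv (s := {z | P (e z).1 ∧ Q (e z).2}) (by simp),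
    ← ZMod.card_filter_range_natCast]
  simp [e, map_natCast]

def IsEulerLiar (n a : ℕ) : Prop :=
  Nat.Coprime a n ∧ (jacobiSym (a : ℤ) n ≡ (a : ℤ) ^ ((n - 1) / 2) [ZMOD n])

theorem mem_eulerLiars {n a : ℕ} : a ∈ eulerLiars n ↔ a < n ∧ IsEulerLiar n a := by
  simp [eulerLiars, IsEulerLiar]

theorem Int.modEq_mul_iff_intCast_eq {m n : ℕ} (hmn : m.Coprime n) {a b : ℤ} :
    a ≡ b [ZMOD (m * n : ℕ)] ↔ (a : ZMod m) = b ∧ (a : ZMod n) = b := by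
  rw [ZMod.intCast_eq_intCast_iff, ZMod.intCast_eq_intCast_iff, Nat.cast_mul,
    Int.modEq_and_modEq_iff_modEq_mul (by simpa using hmn)]

theorem ZMod.intCast_eq_intCast_iff_of_isUnit {p : ℕ} [Fact (2 < p)] {s t : ℤ} (hs : IsUnit s)
    (ht : IsUnit t) : (s : ZMod p) = t ↔ s = t := by
  rcases Int.isUnit_iff.mp hs with rfl | rfl <;> rcases Int.isUnit_iff.mp ht with rfl | rfl <;>
    simp [ZMod.neg_one_ne_one, ZMod.neg_one_ne_one.symm]

theorem Nat.coprime_iff_natCast_ne_zero {a p : ℕ} (hp : p.Prime) :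
    a.Coprime p ↔ (a : ZMod p) ≠ 0 := by
  rw [Nat.coprime_comm, hp.coprime_iff_not_dvd, Ne, ZMod.natCast_eq_zero_iff]

theorem legendreSym.isUnit_of_natCast_ne_zero {p : ℕ} [Fact p.Prime] {a : ℕ}
    (ha : (a : ZMod p) ≠ 0) : IsUnit (legendreSym p a) :=
  Int.isUnit_iff.mpr (legendreSym.eq_one_or_neg_one p (by simpa using ha))

theorem Nat.coprime_two_mul_add_one_four_mul_add_one (q : ℕ) : (2 * q + 1).Coprime (4 * q + 1) := by
  rw [show 4 * q + 1 = (2 * q + 1) + 2 * q by ring, Nat.coprime_self_add_right, add_comm,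
    Nat.coprime_add_self_left]
  exact Nat.coprime_one_left _

section SophieGerminus

variable {q p₁ p₂ : ℕ}

theorem pow_mul_sub_one_div_two_left [Fact p₁.Prime] (h₁ : p₁ = 2 * q + 1)
    (h₂ : p₂ = 4 * q + 1) {x : ZMod p₁} (hx : x ≠ 0) : x ^ ((p₁ * p₂ - 1) / 2) = x ^ q := by
  have hfermat : x ^ (2 * q) = 1 := by simpa [h₁] using ZMod.pow_card_sub_one_eq_one hx
  have he : (p₁ * p₂ - 1) / 2 = q + 2 * q * (2 * q + 1) := by
    rw [show p₁ * p₂ = 2 * (q + 2 * q * (2 * q + 1)) + 1 by rw [h₁, h₂]; ring]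
    omega
  rw [he, pow_add, pow_mul, hfermat, one_pow, mul_one]

theorem pow_mul_sub_one_div_two_right [Fact p₂.Prime] (h₁ : p₁ = 2 * q + 1)
    (h₂ : p₂ = 4 * q + 1) {y : ZMod p₂} (hy : y ≠ 0) :
    y ^ ((p₁ * p₂ - 1) / 2) = y ^ (2 * q) * y ^ q := by
  have hfermat : y ^ (4 * q) = 1 := by simpa [h₂] using ZMod.pow_card_sub_one_eq_one hy
  have he : (p₁ * p₂ - 1) / 2 = 2 * q + q + 4 * q * q := by
    rw [show p₁ * p₂ = 2 * (2 * q + q + 4 * q * q) + 1 by rw [h₁, h₂]; ring]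
    omega
  rw [he, pow_add, pow_mul y (4 * q), hfermat, one_pow, mul_one, pow_add]

theorem isEulerLiar_iff [Fact p₁.Prime] [Fact p₂.Prime] (h₁ : p₁ = 2 * q + 1)
    (h₂ : p₂ = 4 * q + 1) (a : ℕ) :
    IsEulerLiar (p₁ * p₂) a ↔ ((a : ZMod p₁) ≠ 0 ∧ (a : ZMod p₂) ≠ 0) ∧
      (jacobiSym a (p₁ * p₂) : ZMod p₁) = (a : ZMod p₁) ^ q ∧
      (jacobiSym a (p₁ * p₂) : ZMod p₂) = (a : ZMod p₂) ^ (2 * q) * (a : ZMod p₂) ^ q := by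
  have hcop : p₁.Coprime p₂ := h₁ ▸ h₂ ▸ Nat.coprime_two_mul_add_one_four_mul_add_one q
  rw [IsEulerLiar, Nat.coprime_mul_iff_right, Nat.coprime_iff_natCast_ne_zero Fact.out,
    Nat.coprime_iff_natCast_ne_zero Fact.out, Int.modEq_mul_iff_intCast_eq hcop]
  push_cast
  exact and_congr_right fun ⟨hX, hY⟩ => by
    rw [pow_mul_sub_one_div_two_left h₁ h₂ hX, pow_mul_sub_one_div_two_right h₁ h₂ hY]

theorem isEulerLiar_and_jacobiSym_eq_iff [Fact p₁.Prime] [Fact p₂.Prime] (h₁ : p₁ = 2 * q + 1)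
    (h₂ : p₂ = 4 * q + 1) {ε : ℤ} (hε : IsUnit ε) (a : ℕ) :
    IsEulerLiar (p₁ * p₂) a ∧ jacobiSym a (p₁ * p₂) = ε ↔
      (a : ZMod p₁) ^ q = ε ∧ (a : ZMod p₂) ^ q = ε := by
  have hq : q ≠ 0 := by have := (Fact.out : p₁.Prime).two_le; omega
  have : Fact (2 < p₁) := ⟨by omega⟩
  have : Fact (2 < p₂) := ⟨by omega⟩
  have hL₁ : (legendreSym p₁ a : ZMod p₁) = (a : ZMod p₁) ^ q := by
    simpa [show p₁ / 2 = q by omega] using legendreSym.eq_pow p₁ a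
  have hL₂ : (legendreSym p₂ a : ZMod p₂) = (a : ZMod p₂) ^ (2 * q) := by
    simpa [show p₂ / 2 = 2 * q by omega] using legendreSym.eq_pow p₂ a
  have hJ : jacobiSym a (p₁ * p₂) = legendreSym p₁ a * legendreSym p₂ a := by
    rw [jacobiSym.mul_right, jacobiSym.legendreSym.to_jacobiSym,
      jacobiSym.legendreSym.to_jacobiSym]
  rw [isEulerLiar_iff h₁ h₂, hJ]
  push_cast
  constructor
  · rintro ⟨⟨⟨hX, hY⟩, hc₁, hc₂⟩, hJε⟩
    have hu₁ := legendreSym.isUnit_of_natCast_ne_zero hX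
    rw [← hL₁] at hc₁
    rw [← hL₂] at hc₂
    -- modulo `p₁` the Euler power is `(a/p₁)`, which forces `(a/p₂) = 1`
    have hL₂one : legendreSym p₂ a = 1 := by
      refine (mul_eq_left₀ hu₁.ne_zero).mp ?_
      refine (ZMod.intCast_eq_intCast_iff_of_isUnit (p := p₁)
        (hu₁.mul (legendreSym.isUnit_of_natCast_ne_zero hY)) hu₁).mp ?_
      push_cast
      exact hc₁
    rw [hL₂one, mul_one] at hJε
    rw [hL₂one, hJε, Int.cast_one, mul_one, one_mul] at hc₂
    exact ⟨by rw [← hL₁, hJε], hc₂.symm⟩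
  · rintro ⟨hX, hY⟩
    have hX0 : (a : ZMod p₁) ≠ 0 := ne_zero_pow hq (hX ▸ (hε.map (Int.castRingHom _)).ne_zero)
    have hY0 : (a : ZMod p₂) ≠ 0 := ne_zero_pow hq (hY ▸ (hε.map (Int.castRingHom _)).ne_zero)
    have hεsq : (ε : ZMod p₂) ^ 2 = 1 := by rw [← Int.cast_pow, Int.isUnit_sq hε, Int.cast_one]
    have hL₁ε : legendreSym p₁ a = ε :=
      (ZMod.intCast_eq_intCast_iff_of_isUnit (legendreSym.isUnit_of_natCast_ne_zero hX0) hε).mp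
        (hL₁.trans hX)
    have hL₂one : legendreSym p₂ a = 1 := by
      refine (ZMod.intCast_eq_intCast_iff_of_isUnit (p := p₂)
        (legendreSym.isUnit_of_natCast_ne_zero hY0) isUnit_one).mp ?_
      rw [hL₂, mul_comm, pow_mul, hY, hεsq, Int.cast_one]
    refine ⟨⟨⟨hX0, hY0⟩, ?_, ?_⟩, by rw [hL₁ε, hL₂one, mul_one]⟩
    · rw [hL₁ε, hL₂one, hX, Int.cast_one, mul_one]
    · rw [hL₁ε, hL₂one, mul_comm 2 q, pow_mul, hY, hεsq, Int.cast_one, mul_one, one_mul]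

theorem card_filter_eulerLiars_jacobiSym_eq [Fact p₁.Prime] [Fact p₂.Prime] (h₁ : p₁ = 2 * q + 1)
    (h₂ : p₂ = 4 * q + 1) {ε : ℤ} (hε : IsUnit ε) :
    #((eulerLiars (p₁ * p₂)).filter fun a : ℕ => jacobiSym a (p₁ * p₂) = ε) = q * q := by
  have hfilter : (eulerLiars (p₁ * p₂)).filter (fun a : ℕ => jacobiSym a (p₁ * p₂) = ε) =
      (range (p₁ * p₂)).filter fun a : ℕ => (a : ZMod p₁) ^ q = ε ∧ (a : ZMod p₂) ^ q = ε := by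
    ext a
    rw [mem_filter, mem_filter, mem_eulerLiars, mem_range, and_assoc,
      isEulerLiar_and_jacobiSym_eq_iff h₁ h₂ hε]
  have hchar₁ : ringChar (ZMod p₁) ≠ 2 := by rw [ZMod.ringChar_zmod_n]; omega
  have hchar₂ : ringChar (ZMod p₂) ≠ 2 := by rw [ZMod.ringChar_zmod_n]; omega
  have hcop : p₁.Coprime p₂ := h₁ ▸ h₂ ▸ Nat.coprime_two_mul_add_one_four_mul_add_one q
  rw [hfilter, ZMod.card_filter_range_mul hcop (fun x => x ^ q = ε) (fun y => y ^ q = ε),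
    FiniteField.card_filter_pow_eq_of_isUnit hchar₁ hε (by rw [ZMod.card]; exact ⟨1, by omega⟩),
    FiniteField.card_filter_pow_eq_of_isUnit hchar₂ hε (by rw [ZMod.card]; exact ⟨2, by omega⟩)]

theorem card_eulerLiars [Fact p₁.Prime] [Fact p₂.Prime] (h₁ : p₁ = 2 * q + 1)
    (h₂ : p₂ = 4 * q + 1) : #(eulerLiars (p₁ * p₂)) = 2 * (q * q) := by
  have hsign : (eulerLiars (p₁ * p₂)).filter (fun a : ℕ => ¬jacobiSym a (p₁ * p₂) = 1) =
      (eulerLiars (p₁ * p₂)).filter fun a : ℕ => jacobiSym a (p₁ * p₂) = -1 := by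
    refine filter_congr fun a ha => ?_
    have hgcd : Int.gcd a (p₁ * p₂ : ℕ) = 1 := by
      rw [Int.gcd_natCast_natCast]; exact (mem_eulerLiars.mp ha).2.1
    rcases jacobiSym.eq_one_or_neg_one hgcd with h | h <;> simp [h]
  rw [← card_filter_add_card_filter_not (p := fun a : ℕ => jacobiSym a (p₁ * p₂) = 1), hsign,
    card_filter_eulerLiars_jacobiSym_eq h₁ h₂ isUnit_one,
    card_filter_eulerLiars_jacobiSym_eq h₁ h₂ isUnit_one.neg]
  ring

end SophieGerminus

/-- A Sophie Germinus pseudoprime `n = p₁ p₂` with `p₁ > 3` prime and `p₂ = 2p₁ - 1`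
prime has exactly `φ(n)/4` Euler liars, half with Jacobi symbol `1` and half with
Jacobi symbol `-1`. -/
theorem sophieGerminus_eulerLiars (p₁ p₂ n : ℕ)
    (hp₁ : p₁.Prime) (hp₁3 : 3 < p₁)
    (hp₂def : p₂ = 2 * p₁ - 1) (hp₂ : p₂.Prime) (hn : n = p₁ * p₂) :
    (eulerLiars n).card = n.totient / 4 ∧
    ((eulerLiars n).filter (fun a => jacobiSym (a : ℤ) n = 1)).card
      = (eulerLiars n).card / 2 ∧
    ((eulerLiars n).filter (fun a => jacobiSym (a : ℤ) n = -1)).card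
      = (eulerLiars n).card / 2 := by
  obtain ⟨q, h₁⟩ := hp₁.odd_of_ne_two (by omega)
  have h₂ : p₂ = 4 * q + 1 := by omega
  have : Fact p₁.Prime := ⟨hp₁⟩
  have : Fact p₂.Prime := ⟨hp₂⟩
  have htotient : n.totient = 8 * (q * q) := by
    rw [hn, Nat.totient_mul (h₁ ▸ h₂ ▸ Nat.coprime_two_mul_add_one_four_mul_add_one q),
      Nat.totient_prime hp₁, Nat.totient_prime hp₂, h₁, h₂, Nat.add_sub_cancel, Nat.add_sub_cancel]
    ring
  subst hn
  simp only [card_filter_bind_pure_of_injective Nat.cast_injective,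
    card_filter_eulerLiars_jacobiSym_eq h₁ h₂ isUnit_one,
    card_filter_eulerLiars_jacobiSym_eq h₁ h₂ isUnit_one.neg, card_eulerLiars h₁ h₂, htotient]
  omega
end
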